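/- arXiv:2409.12736 — 6 statements merged into one kernel-verified Lean document; each statement's English description precedes it below -/
import Mathlib

section
/- Suppose (λ, φ, ζ) satisfies the master stability equation with ζ a nonzero T-periodic C¹ function, where φ = 2πl/N for some l ∈ {1,…,N}. Define z = (z_1,…,z_N) by z_n(t) = ζ(t−nτ)·e^{λt + inφ}. Then z is well defined with respect to indices modulo N (the defining formula satisfies z_{n+N}(t) = z_n(t)), z is nonzero, z satisfies z_n'(t) = Σ_{|m|≤r} A_m(t−nτ) z_{n+m}(t) for all n and all t (indices mod N), and z(t+T) = e^{λT} z(t) for all t; that is, μ = e^{λT} is a Floquet multiplier of the DTW with bundle z. -/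
noncomputable section

/-- The tuple of wave arguments `(y(t+rτ), …, y(t), …, y(t−rτ))`:
slot `j : Fin (2r+1)` corresponds to the coupling offset `m = j − r`
and carries the value `y(t − mτ)`. -/
def waveArgs (d r : ℕ) (y : ℝ → Fin d → ℝ) (τ t : ℝ) : Fin (2 * r + 1) → Fin d → ℝ :=
  fun j => y (t - (((j : ℕ) : ℝ) - (r : ℝ)) * τ)

/-- The real Jacobian matrix of `G` with respect to its `j`-th `d`-dimensional
block argument, evaluated along the traveling wave profile: this is `A_{j−r}(t)`. -/
def AmatR (d r : ℕ) (G : (Fin (2 * r + 1) → Fin d → ℝ) → Fin d → ℝ)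
    (y : ℝ → Fin d → ℝ) (τ : ℝ) (t : ℝ) (j : Fin (2 * r + 1)) :
    Matrix (Fin d) (Fin d) ℝ :=
  Matrix.of fun i k => fderiv ℝ G (waveArgs d r y τ t) (Pi.single j (Pi.single k 1)) i

/-- The complexified Jacobian matrices `A_{j−r}(t)`. -/
def Amat (d r : ℕ) (G : (Fin (2 * r + 1) → Fin d → ℝ) → Fin d → ℝ)
    (y : ℝ → Fin d → ℝ) (τ : ℝ) (t : ℝ) (j : Fin (2 * r + 1)) :
    Matrix (Fin d) (Fin d) ℂ :=
  (AmatR d r G y τ t j).map (fun a => (a : ℂ))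

/-- The profile equation `y'(t) = G(y(t+rτ), …, y(t), …, y(t−rτ))`. -/
def SatProfile (d r : ℕ) (G : (Fin (2 * r + 1) → Fin d → ℝ) → Fin d → ℝ)
    (y : ℝ → Fin d → ℝ) (τ : ℝ) : Prop :=
  ∀ t : ℝ, HasDerivAt y (G (waveArgs d r y τ t)) t

/-- The coupling offset `m = j − r` as a real number. -/
def mShift (r : ℕ) (j : Fin (2 * r + 1)) : ℝ := ((j : ℕ) : ℝ) - (r : ℝ)

/-- The coupling offset `m = j − r` as an element of `ZMod N` (node index shift). -/
def nodeOff (N r : ℕ) (j : Fin (2 * r + 1)) : ZMod N :=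
  ((((j : ℕ) : ℤ) - (r : ℤ) : ℤ) : ZMod N)

/-- The master stability equation for the triple `(λ, φ, ζ)`:
`ζ'(t) = −λ ζ(t) + ∑_{|m| ≤ r} e^{imφ} A_m(t) ζ(t − mτ)`. -/
def SatMSE (d r : ℕ) (A : ℝ → Fin (2 * r + 1) → Matrix (Fin d) (Fin d) ℂ) (τ : ℝ)
    (lam : ℂ) (φ : ℝ) (ζ : ℝ → Fin d → ℂ) : Prop :=
  ∀ t : ℝ, HasDerivAt ζ
    (-lam • ζ t + ∑ j : Fin (2 * r + 1),
      Complex.exp (Complex.I * ((mShift r j * φ : ℝ) : ℂ)) •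
        (A t j).mulVec (ζ (t - mShift r j * τ))) t

/-- The Floquet problem for a discrete traveling wave on `N` nodes:
`z_n'(t) = ∑_{|m| ≤ r} A_m(t − nτ) z_{n+m}(t)` (indices mod `N`) and
`z(t+T) = μ z(t)`; i.e. `μ` is a Floquet multiplier with bundle `z`. -/
def SatFloquet (N d r : ℕ) (A : ℝ → Fin (2 * r + 1) → Matrix (Fin d) (Fin d) ℂ)
    (τ T : ℝ) (μ : ℂ) (z : ZMod N → ℝ → Fin d → ℂ) : Prop :=
  (∀ (n : ZMod N) (t : ℝ), HasDerivAt (z n)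
      (∑ j : Fin (2 * r + 1),
        (A (t - ((n.val : ℕ) : ℝ) * τ) j).mulVec (z (n + nodeOff N r j) t)) t) ∧
    ∀ (n : ZMod N) (t : ℝ), z n (t + T) = μ • z n t

/-- The plane-wave bundle component `ζ(t − ντ) e^{λt + iνφ}`. -/
def pwave (d : ℕ) (lam : ℂ) (φ τ : ℝ) (ζ : ℝ → Fin d → ℂ) (ν : ℕ) (t : ℝ) : Fin d → ℂ :=
  fun k => Complex.exp (lam * (t : ℂ) + Complex.I * (((ν : ℝ) * φ : ℝ) : ℂ)) *
    ζ (t - (ν : ℝ) * τ) k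

/-- `Ξ` is the fundamental matrix solution of the linear Floquet ODE:
`Ξ(0) = Id` and every `t ↦ Ξ(t)v` solves `z' = K(t)z`. -/
def IsFundamental (N d r : ℕ) [NeZero N]
    (A : ℝ → Fin (2 * r + 1) → Matrix (Fin d) (Fin d) ℂ) (τ : ℝ)
    (Ξ : ℝ → Matrix (ZMod N × Fin d) (ZMod N × Fin d) ℂ) : Prop :=
  Ξ 0 = 1 ∧ ∀ (v : ZMod N × Fin d → ℂ) (t : ℝ),
    HasDerivAt (fun s => (Ξ s).mulVec v)
      (fun p => (∑ j : Fin (2 * r + 1),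
        (A (t - ((p.1.val : ℕ) : ℝ) * τ) j).mulVec
          (fun k => (Ξ t).mulVec v (p.1 + nodeOff N r j, k))) p.2) t

/-- `μ` is a simple eigenvalue of the matrix `M`. -/
def IsSimpleEigenvalue {n : Type*} [Fintype n] [DecidableEq n]
    (M : Matrix n n ℂ) (μ : ℂ) : Prop :=
  Polynomial.rootMultiplicity μ (Matrix.charpoly M) = 1

/-- The matrix `V(φ) = (1/√N)(e^{iφ}, e^{2iφ}, …, e^{i(N−1)φ}, 1)ᵀ ⊗ Id_d`. -/
def Vmat (N d : ℕ) (φ : ℝ) : Matrix (ZMod N × Fin d) (Fin d) ℂ :=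
  Matrix.of fun p k =>
    if p.2 = k then
      Complex.exp (Complex.I * ((((p.1.val : ℕ) : ℝ) * φ : ℝ) : ℂ)) / ((Real.sqrt N : ℝ) : ℂ)
    else 0

/-- The reduced monodromy matrix `R(φ) = V(φ)ᴴ Ξ(τ) V(φ)`. -/
def Rmat (N d : ℕ) [NeZero N] (Ξτ : Matrix (ZMod N × Fin d) (ZMod N × Fin d) ℂ)
    (φ : ℝ) : Matrix (Fin d) (Fin d) ℂ :=
  (Vmat N d φ).conjTranspose * Ξτ * Vmat N d φ

/-- The circulant companion matrix `C`: `(Cv)_n = v_{n−1}` (indices mod `N`). -/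
def Cmat (N : ℕ) : Matrix (ZMod N) (ZMod N) ℂ :=
  Matrix.of fun a b => if b = a - 1 then 1 else 0


/-- The ℤ-indexed plane-wave bundle `z_n(t) = ζ(t − nτ) e^{λt + inφ}`. -/
def bundleZ (d : ℕ) (lam : ℂ) (φ τ : ℝ) (ζ : ℝ → Fin d → ℂ) (n : ℤ) (t : ℝ) : Fin d → ℂ :=
  fun k => Complex.exp (lam * (t : ℂ) + Complex.I * (((n : ℝ) * φ : ℝ) : ℂ)) *
    ζ (t - (n : ℝ) * τ) k

/-!
Substituting the plane-wave ansatz `z_n(t) = e^{λt + inφ} ζ(t − nτ)` into the network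
equation, the derivative of the exponential factor contributes `λ ζ`, which cancels the
`−λ ζ` of the master stability equation, while shifting the node index by `m` multiplies
by `e^{imφ}` and delays `ζ` by `mτ`: exactly the coupling sum of the MSE. Periodicity in
`n` with period `N` comes from `Nτ = MT` and `e^{iNφ} = 1`; the Floquet relation from the
`T`-periodicity of `ζ`.
-/

open Complex

theorem exp_I_mul_natCast_mul_two_pi_mul_div (N l : ℕ) :
    cexp (I * (((N : ℝ) * (2 * Real.pi * l / N) : ℝ) : ℂ)) = 1 := by
  rcases eq_or_ne N 0 with rfl | hN
  · simp
  · have hNφ : (N : ℝ) * (2 * Real.pi * l / N) = 2 * Real.pi * l := by field_simp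
    rw [hNφ, ← exp_int_mul_two_pi_mul_I l]
    push_cast
    ring_nf

section bundleZ

variable {d : ℕ} {lam : ℂ} {φ τ : ℝ} {ζ : ℝ → Fin d → ℂ}

theorem bundleZ_eq_smul (n : ℤ) (t : ℝ) :
    bundleZ d lam φ τ ζ n t = cexp (lam * t + I * ((n * φ : ℝ) : ℂ)) • ζ (t - n * τ) :=
  rfl

theorem bundleZ_add (n m : ℤ) (t : ℝ) :
    bundleZ d lam φ τ ζ (n + m) t =
      cexp (lam * t + I * ((n * φ : ℝ) : ℂ)) •
        cexp (I * ((m * φ : ℝ) : ℂ)) • ζ (t - n * τ - m * τ) := by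
  rw [bundleZ_eq_smul, smul_smul, ← exp_add]
  congr 2
  · push_cast; ring
  · push_cast; ring

theorem bundleZ_eq_zero_iff {n : ℤ} {t : ℝ} :
    bundleZ d lam φ τ ζ n t = 0 ↔ ζ (t - n * τ) = 0 := by
  rw [bundleZ_eq_smul, smul_eq_zero, or_iff_right (exp_ne_zero _)]

theorem bundleZ_add_of_periodic {N : ℤ} (hζ : Function.Periodic ζ (N * τ))
    (hexp : cexp (I * ((N * φ : ℝ) : ℂ)) = 1) (n : ℤ) (t : ℝ) :
    bundleZ d lam φ τ ζ (n + N) t = bundleZ d lam φ τ ζ n t := by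
  rw [bundleZ_add, hexp, one_smul, hζ.sub_eq, bundleZ_eq_smul]

theorem bundleZ_time_add_of_periodic {T : ℝ} (hζ : Function.Periodic ζ T) (n : ℤ) (t : ℝ) :
    bundleZ d lam φ τ ζ n (t + T) = cexp (lam * T) • bundleZ d lam φ τ ζ n t := by
  rw [bundleZ_eq_smul, bundleZ_eq_smul, smul_smul, ← exp_add, add_sub_right_comm, hζ]
  congr 2
  push_cast
  ring

theorem hasDerivAt_bundleZ {n : ℤ} {t : ℝ} {ζ' : Fin d → ℂ}
    (hζ : HasDerivAt ζ ζ' (t - n * τ)) :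
    HasDerivAt (bundleZ d lam φ τ ζ n)
      (cexp (lam * t + I * ((n * φ : ℝ) : ℂ)) • (lam • ζ (t - n * τ) + ζ')) t := by
  have hexp : HasDerivAt (fun s : ℝ => cexp (lam * s + I * ((n * φ : ℝ) : ℂ)))
      (cexp (lam * t + I * ((n * φ : ℝ) : ℂ)) * lam) t := by
    simpa using (((hasDerivAt_id t).ofReal_comp.const_mul lam).add_const _).cexp
  have hshift : HasDerivAt (fun s : ℝ => ζ (s - n * τ)) ζ' t := by
    have h := hζ.scomp t ((hasDerivAt_id t).sub_const (n * τ))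
    rwa [one_smul] at h
  refine (hexp.smul hshift).congr_deriv ?_
  rw [smul_add, smul_smul, add_comm]

theorem hasDerivAt_bundleZ_of_satMSE {r : ℕ}
    {A : ℝ → Fin (2 * r + 1) → Matrix (Fin d) (Fin d) ℂ} (hMSE : SatMSE d r A τ lam φ ζ)
    (n : ℤ) (t : ℝ) :
    HasDerivAt (bundleZ d lam φ τ ζ n)
      (∑ j : Fin (2 * r + 1),
        (A (t - n * τ) j).mulVec (bundleZ d lam φ τ ζ (n + (((j : ℕ) : ℤ) - r)) t)) t := by
  convert hasDerivAt_bundleZ (hMSE (t - n * τ)) using 1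
  have hoff (j : Fin (2 * r + 1)) : ((((j : ℕ) : ℤ) - r : ℤ) : ℝ) = mShift r j := by
    simp [mShift]
  simp only [bundleZ_add, hoff, Matrix.mulVec_smul, ← Finset.smul_sum, neg_smul,
    add_neg_cancel_left]

end bundleZ

theorem mse_gives_floquet_bundle_general
    (N d r M l : ℕ)
    (T τ : ℝ) (hcons : (N : ℝ) * τ = (M : ℝ) * T)
    (G : (Fin (2 * r + 1) → Fin d → ℝ) → Fin d → ℝ)
    (y : ℝ → Fin d → ℝ)
    (lam : ℂ) (φ : ℝ) (hφ : φ = 2 * Real.pi * (l : ℝ) / (N : ℝ))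
    (ζ : ℝ → Fin d → ℂ) (hζne : ζ ≠ 0) (hζper : ∀ t, ζ (t + T) = ζ t)
    (hMSE : SatMSE d r (Amat d r G y τ) τ lam φ ζ) :
    (∀ (n : ℤ) (t : ℝ), bundleZ d lam φ τ ζ (n + (N : ℤ)) t = bundleZ d lam φ τ ζ n t) ∧
    (¬ ∀ (n : ℤ) (t : ℝ), bundleZ d lam φ τ ζ n t = 0) ∧
    (∀ (n : ℤ) (t : ℝ), HasDerivAt (fun s => bundleZ d lam φ τ ζ n s)
        (∑ j : Fin (2 * r + 1),
          (Amat d r G y τ (t - (n : ℝ) * τ) j).mulVec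
            (bundleZ d lam φ τ ζ (n + (((j : ℕ) : ℤ) - (r : ℤ))) t)) t) ∧
    (∀ (n : ℤ) (t : ℝ), bundleZ d lam φ τ ζ n (t + T) =
        Complex.exp (lam * (T : ℂ)) • bundleZ d lam φ τ ζ n t) := by
  have hζT : Function.Periodic ζ T := hζper
  have hζNτ : Function.Periodic ζ (((N : ℤ) : ℝ) * τ) := by
    simpa [hcons] using hζT.nat_mul M
  have hexpN : cexp (I * ((((N : ℤ) : ℝ) * φ : ℝ) : ℂ)) = 1 := by
    simpa [hφ] using exp_I_mul_natCast_mul_two_pi_mul_div N l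
  refine ⟨bundleZ_add_of_periodic hζNτ hexpN, fun hz => ?_,
    hasDerivAt_bundleZ_of_satMSE hMSE, bundleZ_time_add_of_periodic hζT⟩
  obtain ⟨t, ht⟩ := Function.ne_iff.mp hζne
  exact ht (by simpa using bundleZ_eq_zero_iff.mp (hz 0 t))

/-- If `(λ, φ, ζ)` satisfies the master stability equation with `ζ` a
nonzero `T`-periodic `C¹` function and `φ = 2πl/N`, `l ∈ {1,…,N}`, then
`z_n(t) = ζ(t−nτ)e^{λt+inφ}` is well defined modulo `N`, nonzero, satisfies the
linearized network equations, and `z(t+T) = e^{λT} z(t)`: `μ = e^{λT}` is a Floquet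
multiplier of the DTW with bundle `z`. -/
theorem mse_gives_floquet_bundle
    (N d r M l : ℕ) (hN : 2 ≤ N) (hd : 1 ≤ d) (hr : 1 ≤ r) (hM : 0 < M)
    (hl1 : 1 ≤ l) (hlN : l ≤ N)
    (T τ : ℝ) (hT : 0 < T) (hτ : 0 < τ) (hcons : (N : ℝ) * τ = (M : ℝ) * T)
    (G : (Fin (2 * r + 1) → Fin d → ℝ) → Fin d → ℝ) (hG : ContDiff ℝ 1 G)
    (y : ℝ → Fin d → ℝ) (hyC1 : ContDiff ℝ 1 y) (hyper : ∀ t, y (t + T) = y t)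
    (hyprof : SatProfile d r G y τ)
    (lam : ℂ) (φ : ℝ) (hφ : φ = 2 * Real.pi * (l : ℝ) / (N : ℝ))
    (ζ : ℝ → Fin d → ℂ) (hζne : ζ ≠ 0) (hζper : ∀ t, ζ (t + T) = ζ t)
    (hζC1 : ContDiff ℝ 1 ζ)
    (hMSE : SatMSE d r (Amat d r G y τ) τ lam φ ζ) :
    (∀ (n : ℤ) (t : ℝ), bundleZ d lam φ τ ζ (n + (N : ℤ)) t = bundleZ d lam φ τ ζ n t) ∧
    (¬ ∀ (n : ℤ) (t : ℝ), bundleZ d lam φ τ ζ n t = 0) ∧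
    (∀ (n : ℤ) (t : ℝ), HasDerivAt (fun s => bundleZ d lam φ τ ζ n s)
        (∑ j : Fin (2 * r + 1),
          (Amat d r G y τ (t - (n : ℝ) * τ) j).mulVec
            (bundleZ d lam φ τ ζ (n + (((j : ℕ) : ℤ) - (r : ℤ))) t)) t) ∧
    (∀ (n : ℤ) (t : ℝ), bundleZ d lam φ τ ζ n (t + T) =
        Complex.exp (lam * (T : ℂ)) • bundleZ d lam φ τ ζ n t) :=
  mse_gives_floquet_bundle_general N d r M l T τ hcons G y lam φ hφ ζ hζne hζper hMSE

end
end

section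
/- Suppose μ ∈ ℂ and a nonzero C¹ function z : ℝ → (ℂ^d)^N satisfy the Floquet problem for the DTW, i.e., z_n'(t) = Σ_{|m|≤r} A_m(t−nτ) z_{n+m}(t) for all n and t (indices mod N) and z(t+T) = μ z(t) for all t. Then necessarily μ ≠ 0, and there exist l ∈ {1,…,N} and a nonzero T-periodic C¹ function ζ : ℝ → ℂ^d such that the triple (λ, φ, ζ) = (Log(μ)/T, 2πl/N, ζ) satisfies the master stability equation, where Log denotes the principal complex logarithm. -/
noncomputable section

/-!
Put `λ = Log μ / T`, so that `e^{λT} = μ`. In the frame moving with the wave,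
`w_n(t) = e^{-λ(t+nτ)} z_n(t+nτ)` is `T`-periodic, and the node-dependent coefficients
`A_m(t - nτ)` of the Floquet problem become the delays `w_{n+m}(t - mτ)`. Since `Nτ = MT`,
this is consistent with reading the index `n + m` modulo `N`, so the system for `w` commutes
with the shift of nodes and is diagonalised by the discrete Fourier transform on `ZMod N`:
the `l`-th Fourier mode of `w` solves the master stability equation with `φ = 2πl/N`, and
since the transform is invertible and `w ≠ 0`, some mode is nonzero.
-/

open Function ZMod

section ExpWeight

variable {F : Type*} [NormedAddCommGroup F] [NormedSpace ℂ F]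

def expWeight (lam : ℂ) (f : ℝ → F) (t : ℝ) : F :=
  Complex.exp (-(lam * t)) • f t

theorem expWeight_eq_zero_iff {lam : ℂ} {f : ℝ → F} {t : ℝ} :
    expWeight lam f t = 0 ↔ f t = 0 := by
  simp [expWeight, Complex.exp_ne_zero]

theorem periodic_expWeight {lam μ : ℂ} {T : ℝ} {f : ℝ → F} (hμ : Complex.exp (lam * T) = μ)
    (hf : ∀ t, f (t + T) = μ • f t) : Periodic (expWeight lam f) T := by
  intro t
  rw [expWeight, expWeight, hf, smul_smul, ← hμ, ← Complex.exp_add]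
  push_cast
  ring_nf

theorem HasDerivAt.expWeight {lam : ℂ} {f : ℝ → F} {f' : F} {t : ℝ} (hf : HasDerivAt f f' t) :
    HasDerivAt (expWeight lam f)
      (-lam • expWeight lam f t + Complex.exp (-(lam * t)) • f') t := by
  have hexp : HasDerivAt (fun s : ℝ => Complex.exp (-(lam * s)))
      (Complex.exp (-(lam * t)) * -lam) t := by
    refine HasDerivAt.cexp ?_
    simpa using ((Complex.ofRealCLM.hasDerivAt (x := t)).const_mul lam).fun_neg
  refine (hexp.fun_smul hf).congr_deriv ?_
  rw [_root_.expWeight, add_comm, smul_smul, mul_comm]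

theorem ContDiff.expWeight {lam : ℂ} {f : ℝ → F} {n : WithTop ℕ∞} (hf : ContDiff ℝ n f) :
    ContDiff ℝ n (expWeight lam f) :=
  ((contDiff_const.mul Complex.ofRealCLM.contDiff).neg.cexp).smul hf

end ExpWeight

theorem Function.Periodic.apply_add_val_intCast_mul {X : Type*} {N : ℕ} [NeZero N] {f : ℝ → X}
    {c : ℝ} (hf : Periodic f (N * c)) (a : ℤ) (s : ℝ) :
    f (s + ((a : ZMod N).val : ℝ) * c) = f (s + a * c) := by
  have hval : (((a : ZMod N).val : ℤ) : ℝ) = a - (a / N : ℤ) * N := by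
    rw [ZMod.val_intCast, Int.emod_def]; push_cast; ring
  rw [show s + a * c = s + ((a : ZMod N).val : ℝ) * c + (a / N : ℤ) * (N * c) by
    rw [← Int.cast_natCast, hval]; ring]
  exact (hf.int_mul _ _).symm

section Comoving

variable {N d r : ℕ} {A : ℝ → Fin (2 * r + 1) → Matrix (Fin d) (Fin d) ℂ} {τ T : ℝ} {μ lam : ℂ}
  {z : ZMod N → ℝ → Fin d → ℂ}

def comoving (lam : ℂ) (τ : ℝ) (z : ZMod N → ℝ → Fin d → ℂ) (n : ZMod N) (t : ℝ) : Fin d → ℂ :=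
  expWeight lam (z n) (t + n.val * τ)

def SatComoving (N d r : ℕ) (A : ℝ → Fin (2 * r + 1) → Matrix (Fin d) (Fin d) ℂ) (τ : ℝ)
    (lam : ℂ) (w : ZMod N → ℝ → Fin d → ℂ) : Prop :=
  ∀ (n : ZMod N) (t : ℝ), HasDerivAt (w n)
    (-lam • w n t + ∑ j : Fin (2 * r + 1),
      (A t j).mulVec (w (n + nodeOff N r j) (t - mShift r j * τ))) t

theorem SatFloquet.multiplier_ne_zero (hz : SatFloquet N d r A τ T μ z) (hz0 : z ≠ 0) :
    μ ≠ 0 := by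
  rintro rfl
  refine hz0 (funext fun n => funext fun t => ?_)
  simpa using hz.2 n (t - T)

theorem SatFloquet.satComoving [NeZero N] {M : ℕ} (hcons : (N : ℝ) * τ = M * T)
    (hz : SatFloquet N d r A τ T μ z) (hμ : Complex.exp (lam * T) = μ) :
    SatComoving N d r A τ lam (comoving lam τ z) := by
  intro n t
  have hper (k : ZMod N) : Periodic (expWeight lam (z k)) (N * τ) := by
    rw [hcons]; exact (periodic_expWeight hμ (hz.2 k)).nat_mul M
  have hshift (j : Fin (2 * r + 1)) :
      expWeight lam (z (n + nodeOff N r j)) (t + n.val * τ) =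
        comoving lam τ z (n + nodeOff N r j) (t - mShift r j * τ) := by
    have hidx : n + nodeOff N r j = ((n.val + ((j : ℤ) - r) : ℤ) : ZMod N) := by
      simp [nodeOff]
    rw [comoving, hidx, (hper _).apply_add_val_intCast_mul, mShift]
    push_cast
    ring_nf
  refine (((hz.1 n (t + n.val * τ)).expWeight (lam := lam)).comp_add_const t (n.val * τ)
    ).congr_deriv ?_
  simp only [add_sub_cancel_right, Finset.smul_sum, ← Matrix.mulVec_smul]
  congr 1
  exact Finset.sum_congr rfl fun j _ => congrArg _ (hshift j)

theorem periodic_comoving (hz : SatFloquet N d r A τ T μ z) (hμ : Complex.exp (lam * T) = μ)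
    (n : ZMod N) : Periodic (comoving lam τ z n) T := fun t => by
  simp only [comoving, add_right_comm t T]
  exact periodic_expWeight hμ (hz.2 n) _

theorem contDiff_comoving {k : WithTop ℕ∞} (hz : ∀ n, ContDiff ℝ k (z n)) (n : ZMod N) :
    ContDiff ℝ k (comoving lam τ z n) :=
  (hz n).expWeight.comp (contDiff_id.add contDiff_const)

theorem comoving_ne_zero (hz0 : z ≠ 0) : comoving lam τ z ≠ 0 := by
  obtain ⟨n, t, hnt⟩ : ∃ n t, z n t ≠ 0 := by
    by_contra! h
    exact hz0 (funext fun n => funext (h n))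
  intro h
  have := congrFun (congrFun h n) (t - n.val * τ)
  rw [comoving, sub_add_cancel] at this
  exact hnt (expWeight_eq_zero_iff.mp this)

end Comoving

namespace ZMod

variable {N : ℕ} [NeZero N] {E F : Type*} [AddCommGroup E] [Module ℂ E] [AddCommGroup F]
  [Module ℂ F]

theorem dft_comp_linearMap (L : E →ₗ[ℂ] F) (Φ : ZMod N → E) (k : ZMod N) :
    𝓕 (fun j => L (Φ j)) k = L (𝓕 Φ k) := by
  simp only [dft_apply, map_sum, _root_.map_smul]

theorem dft_apply_apply {X : Type*} (Φ : ZMod N → X → E) (k : ZMod N) (x : X) :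
    𝓕 Φ k x = 𝓕 (fun j => Φ j x) k :=
  (dft_comp_linearMap (LinearMap.proj x) Φ k).symm

theorem dft_comp_add_const (Φ : ZMod N → E) (a k : ZMod N) :
    𝓕 (fun j => Φ (j + a)) k = stdAddChar (a * k) • 𝓕 Φ k := by
  simp only [dft_apply, Finset.smul_sum, smul_smul, ← AddChar.map_add_eq_mul]
  exact Fintype.sum_equiv (Equiv.addRight a) _ _ fun j => by simp; ring_nf

theorem hasDerivAt_dft {G : Type*} [NormedAddCommGroup G] [NormedSpace ℂ G] {Φ : ZMod N → ℝ → G}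
    {Φ' : ZMod N → G} {t : ℝ} (hΦ : ∀ j, HasDerivAt (Φ j) (Φ' j) t) (k : ZMod N) :
    HasDerivAt (𝓕 Φ k) (𝓕 Φ' k) t := by
  simp only [dft_apply]
  exact HasDerivAt.sum fun j _ => (hΦ j).const_smul _

theorem periodic_dft {Φ : ZMod N → ℝ → E} {c : ℝ} (hΦ : ∀ j, Periodic (Φ j) c) (k : ZMod N) : Periodic (𝓕 Φ k) c := fun t => by
  simp only [dft_apply_apply, hΦ _ t]

theorem contDiff_dft {G : Type*} [NormedAddCommGroup G] [NormedSpace ℂ G] {Φ : ZMod N → ℝ → G}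
    {n : WithTop ℕ∞} (hΦ : ∀ j, ContDiff ℝ n (Φ j)) (k : ZMod N) : ContDiff ℝ n (𝓕 Φ k) := by
  rw [dft_apply, Finset.sum_fn]
  exact ContDiff.sum fun j _ => (hΦ j).const_smul (stdAddChar (-(j * k)) : ℂ)

theorem exists_natCast_eq (k : ZMod N) : ∃ l : ℕ, 1 ≤ l ∧ l ≤ N ∧ (l : ZMod N) = k := by
  by_cases hk : k = 0
  · exact ⟨N, NeZero.one_le, le_rfl, by rw [natCast_self, hk]⟩
  · exact ⟨k.val, val_pos.mpr hk, (val_lt k).le, natCast_zmod_val k⟩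

end ZMod

theorem stdAddChar_nodeOff_mul_natCast {N : ℕ} [NeZero N] (r l : ℕ) (j : Fin (2 * r + 1)) :
    stdAddChar (nodeOff N r j * (l : ZMod N)) =
      Complex.exp (Complex.I * ((mShift r j * (2 * Real.pi * l / N) : ℝ) : ℂ)) := by
  rw [nodeOff, show ((((j : ℤ) - r : ℤ) : ZMod N) * l) = (((j - r) * l : ℤ) : ZMod N) by
    push_cast; rfl, stdAddChar_coe, mShift]
  congr 1
  push_cast
  field_simp

theorem SatComoving.satMSE_dft {N d r : ℕ} [NeZero N]
    {A : ℝ → Fin (2 * r + 1) → Matrix (Fin d) (Fin d) ℂ} {τ : ℝ} {lam : ℂ}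
    {w : ZMod N → ℝ → Fin d → ℂ} (hw : SatComoving N d r A τ lam w) (l : ℕ) :
    SatMSE d r A τ lam (2 * Real.pi * l / N) (𝓕 w l) := by
  intro t
  refine (hasDerivAt_dft (fun n => hw n t) l).congr_deriv ?_
  have hlin : (fun n => -lam • w n t + ∑ j, (A t j).mulVec (w (n + nodeOff N r j)
      (t - mShift r j * τ))) = -lam • (fun n => w n t) + ∑ j, fun n =>
        ((A t j).mulVecLin ∘ₗ LinearMap.proj (t - mShift r j * τ)) (w (n + nodeOff N r j)) := by
    ext; simp
  rw [hlin, map_add, _root_.map_smul, map_sum]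
  simp only [Pi.add_apply, Pi.smul_apply, Finset.sum_apply, dft_comp_linearMap,
    dft_comp_add_const, _root_.map_smul, stdAddChar_nodeOff_mul_natCast, ← dft_apply_apply]
  rfl

theorem floquet_gives_mse_general
    (N d r M : ℕ) (hN : 2 ≤ N)
    (T τ : ℝ) (hT : 0 < T) (hcons : (N : ℝ) * τ = (M : ℝ) * T)
    (G : (Fin (2 * r + 1) → Fin d → ℝ) → Fin d → ℝ)
    (y : ℝ → Fin d → ℝ)
    (μ : ℂ) (z : ZMod N → ℝ → Fin d → ℂ)
    (hzC1 : ∀ n, ContDiff ℝ 1 (z n)) (hzne : z ≠ 0)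
    (hz : SatFloquet N d r (Amat d r G y τ) τ T μ z) :
    μ ≠ 0 ∧ ∃ l : ℕ, 1 ≤ l ∧ l ≤ N ∧ ∃ ζ : ℝ → Fin d → ℂ,
      ζ ≠ 0 ∧ (∀ t, ζ (t + T) = ζ t) ∧ ContDiff ℝ 1 ζ ∧
      SatMSE d r (Amat d r G y τ) τ (Complex.log μ / (T : ℂ))
        (2 * Real.pi * (l : ℝ) / (N : ℝ)) ζ := by
  have : NeZero N := ⟨by omega⟩
  have hμ : μ ≠ 0 := hz.multiplier_ne_zero hzne
  have hexp : Complex.exp (Complex.log μ / T * T) = μ := by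
    rw [div_mul_cancel₀ _ (by exact_mod_cast hT.ne'), Complex.exp_log hμ]
  set w := comoving (Complex.log μ / T) τ z
  obtain ⟨k, hk⟩ : ∃ k, 𝓕 w k ≠ 0 := by
    by_contra! h
    exact comoving_ne_zero hzne ((LinearEquiv.map_eq_zero_iff dft).mp (funext h))
  obtain ⟨l, hl1, hlN, rfl⟩ := exists_natCast_eq k
  exact ⟨hμ, l, hl1, hlN, 𝓕 w l, hk, periodic_dft (periodic_comoving hz hexp) _,
    contDiff_dft (contDiff_comoving hzC1) _, (hz.satComoving hcons hexp).satMSE_dft l⟩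

/-- Every Floquet multiplier `μ` of the DTW with nonzero `C¹` bundle `z`
is nonzero, and corresponds to a solution `(Log μ / T, 2πl/N, ζ)` of the master stability
equation for some `l ∈ {1,…,N}` and a nonzero `T`-periodic `C¹` function `ζ`. -/
theorem floquet_gives_mse
    (N d r M : ℕ) (hN : 2 ≤ N) (hd : 1 ≤ d) (hr : 1 ≤ r) (hM : 0 < M)
    (T τ : ℝ) (hT : 0 < T) (hτ : 0 < τ) (hcons : (N : ℝ) * τ = (M : ℝ) * T)
    (G : (Fin (2 * r + 1) → Fin d → ℝ) → Fin d → ℝ) (hG : ContDiff ℝ 1 G)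
    (y : ℝ → Fin d → ℝ) (hyC1 : ContDiff ℝ 1 y) (hyper : ∀ t, y (t + T) = y t)
    (hyprof : SatProfile d r G y τ)
    (μ : ℂ) (z : ZMod N → ℝ → Fin d → ℂ)
    (hzC1 : ∀ n, ContDiff ℝ 1 (z n)) (hzne : z ≠ 0)
    (hz : SatFloquet N d r (Amat d r G y τ) τ T μ z) :
    μ ≠ 0 ∧ ∃ l : ℕ, 1 ≤ l ∧ l ≤ N ∧ ∃ ζ : ℝ → Fin d → ℂ,
      ζ ≠ 0 ∧ (∀ t, ζ (t + T) = ζ t) ∧ ContDiff ℝ 1 ζ ∧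
      SatMSE d r (Amat d r G y τ) τ (Complex.log μ / (T : ℂ))
        (2 * Real.pi * (l : ℝ) / (N : ℝ)) ζ :=
  floquet_gives_mse_general N d r M hN T τ hT hcons G y μ z hzC1 hzne hz

end
end

section
/- Suppose μ* is a simple Floquet multiplier of the DTW (i.e., a simple eigenvalue of the monodromy matrix M = Ξ(T)) with bundle z* = (z*_1,…,z*_N), and set λ* = Log(μ*)/T (principal logarithm). Then there exist a unique l* ∈ {1,…,N} and a nonzero T-periodic C¹ function ζ* : ℝ → ℂ^d such that, with φ* = 2πl*/N, the triple (λ*, φ*, ζ*) satisfies the master stability equation and z*_n(t) = ζ*(t−nτ)·e^{λ* t + i n φ*} for all n = 1,…,N and all t ∈ ℝ. -/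
noncomputable section

/-!
Shifting the ring by one node is a symmetry of the Floquet problem: since `N τ = M T` and the
`A_m` are `T`-periodic, `z_{n+1}(t + τ)` is again a bundle of the multiplier `μ`. Both bundles
are `Ξ(t)` applied to their initial values, which are eigenvectors of `Ξ(T)` for `μ`, so the
simplicity of `μ` gives `z_{n+1}(t + τ) = κ z_n(t)`. Going once around the ring,
`κ^N = μ^M = e^{λ N τ}`, hence `κ e^{-λτ} = e^{2πil/N}` for some `l ∈ {1, …, N}`, and
`ζ(t) = e^{-λt} z_0(t)` is the `T`-periodic solution of the master stability equation.
Uniqueness of `l` is the injectivity of `l ↦ e^{2πil/N}` on `{1, …, N}`, read off at nodes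
`0` and `1`.
-/

open Matrix Function Complex

theorem IsSimpleEigenvalue.exists_smul_eq {ι : Type*} [Fintype ι] [DecidableEq ι]
    {B : Matrix ι ι ℂ} {μ : ℂ} (hs : IsSimpleEigenvalue B μ) {v w : ι → ℂ}
    (hv : B *ᵥ v = μ • v) (hw : B *ᵥ w = μ • w) (hv0 : v ≠ 0) : ∃ c : ℂ, c • v = w := by
  set E := Module.End.eigenspace (toLin' B) μ
  have hvE : v ∈ E := Module.End.mem_eigenspace_iff.2 hv
  have hwE : w ∈ E := Module.End.mem_eigenspace_iff.2 hw
  have hle : Module.finrank ℂ E ≤ 1 :=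
    (LinearMap.finrank_eigenspace_le (toLin' B) μ).trans_eq
      (by rw [Matrix.charpoly_toLin']; exact hs)
  have hpos : 0 < Module.finrank ℂ E :=
    Module.finrank_pos_iff_exists_ne_zero.2 ⟨⟨v, hvE⟩, by simpa using hv0⟩
  obtain ⟨c, hc⟩ := exists_smul_eq_of_finrank_eq_one (le_antisymm hle hpos)
    (x := ⟨v, hvE⟩) (by simpa using hv0) ⟨w, hwE⟩
  exact ⟨c, congrArg Subtype.val hc⟩

theorem exp_two_pi_div_eq_pow (N l : ℕ) :
    exp (I * ((2 * Real.pi * l / N : ℝ) : ℂ)) = exp (2 * Real.pi * I / N) ^ l := by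
  rw [← exp_nat_mul]
  congr 1
  push_cast
  ring

theorem exists_mem_Icc_exp_eq_of_pow_eq_one {N : ℕ} [NeZero N] {u : ℂ} (hu : u ^ N = 1) :
    ∃ l : ℕ, (1 ≤ l ∧ l ≤ N) ∧ u = exp (I * ((2 * Real.pi * l / N : ℝ) : ℂ)) := by
  have hprim := isPrimitiveRoot_exp N (NeZero.ne N)
  obtain ⟨i, hiN, rfl⟩ := hprim.eq_pow_of_pow_eq_one hu
  rcases Nat.eq_zero_or_pos i with rfl | hi
  · exact ⟨N, ⟨NeZero.one_le, le_rfl⟩, by rw [exp_two_pi_div_eq_pow, hprim.pow_eq_one, pow_zero]⟩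
  · exact ⟨i, ⟨hi, hiN.le⟩, (exp_two_pi_div_eq_pow N i).symm⟩

theorem injOn_exp_two_pi_div (N : ℕ) :
    Set.InjOn (fun l : ℕ => exp (I * ((2 * Real.pi * l / N : ℝ) : ℂ))) (Set.Icc 1 N) := by
  rintro l ⟨hl1, hlN⟩ l' ⟨hl'1, hl'N⟩ h
  have hprim := isPrimitiveRoot_exp N (by omega)
  simp only [exp_two_pi_div_eq_pow] at h
  have hζ0 : exp (2 * Real.pi * I / N) ≠ 0 := exp_ne_zero _
  have h' : exp (2 * Real.pi * I / N) ^ (l - 1) = exp (2 * Real.pi * I / N) ^ (l' - 1) := by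
    apply mul_right_cancel₀ hζ0
    rwa [← pow_succ, ← pow_succ, Nat.sub_add_cancel hl1, Nat.sub_add_cancel hl'1]
  have := hprim.pow_inj (by omega) (by omega) h'
  omega

theorem exists_lipschitzWith_of_periodic {𝕜 E : Type*} [NontriviallyNormedField 𝕜]
    [CompleteSpace 𝕜] [NormedAddCommGroup E] [NormedSpace 𝕜 E] [FiniteDimensional 𝕜 E]
    {F : ℝ → E →ₗ[𝕜] E} {T : ℝ} (hF : ∀ v, Continuous fun t => F t v) (hp : Periodic F T)
    (hT : T ≠ 0) : ∃ C, ∀ t, LipschitzWith C (F t) := by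
  set F' : ℝ → E →L[𝕜] E := fun t => LinearMap.toContinuousLinearMap (F t)
  have hc : Continuous F' := continuous_clm_apply.2 hF
  have hp' : Periodic F' T := fun t => by simp only [F', hp t]
  obtain ⟨C, hC⟩ := (hp'.isBounded_of_continuous hT hc).exists_norm_le
  refine ⟨C.toNNReal, fun t => ?_⟩
  have hle : ‖F' t‖₊ ≤ C.toNNReal := by
    rw [← NNReal.coe_le_coe, coe_nnnorm, Real.coe_toNNReal']
    exact (hC _ ⟨t, rfl⟩).trans (le_max_left _ _)
  exact (F' t).lipschitz.weaken hle

theorem eq_zpow_smul_of_add_one {R 𝕜 E : Type*} [AddGroupWithOne R] [DivisionRing 𝕜]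
    [AddCommGroup E] [Module 𝕜 E] {z : R → ℝ → E} {κ : 𝕜} {τ : ℝ} (hκ : κ ≠ 0)
    (h : ∀ n t, z (n + 1) (t + τ) = κ • z n t) (m : ℤ) (t : ℝ) :
    z m t = κ ^ m • z 0 (t - m * τ) := by
  induction m using Int.induction_on generalizing t with
  | zero => simp
  | succ i ih =>
    have := h (i : R) (t - τ)
    push_cast at this ih ⊢
    rw [sub_add_cancel] at this
    rw [this, ih, smul_smul, ← zpow_one_add₀ hκ, add_comm (1 : ℤ)]
    congr 2
    ring
  | pred i ih =>
    have := h ((-i - 1 : ℤ) : R) t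
    push_cast at this ih ⊢
    rw [sub_add_cancel, ih] at this
    rw [← inv_smul_smul₀ hκ (z _ t), ← this, smul_smul, ← _root_.zpow_neg_one, ← zpow_add₀ hκ]
    congr 2 <;> ring

theorem apply_add_nat_mul_eq_pow_smul {𝕜 E : Type*} [Monoid 𝕜] [MulAction 𝕜 E] {f : ℝ → E}
    {μ : 𝕜} {T : ℝ} (h : ∀ t, f (t + T) = μ • f t) (m : ℕ) (t : ℝ) :
    f (t + m * T) = μ ^ m • f t := by
  induction m with
  | zero => simp
  | succ k ih => rw [Nat.cast_succ, add_one_mul, ← add_assoc, h, ih, smul_smul, pow_succ']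

theorem exists_eq_exp_of_pow_eq_pow {N M : ℕ} [NeZero N] {τ T : ℝ} {κ μ : ℂ} (hμ : μ ≠ 0)
    (hT : T ≠ 0) (hcons : (N : ℝ) * τ = M * T) (h : κ ^ N = μ ^ M) :
    ∃ l : ℕ, (1 ≤ l ∧ l ≤ N) ∧
      κ = exp (log μ / T * τ + I * ((2 * Real.pi * l / N : ℝ) : ℂ)) := by
  set lam := log μ / T
  have hexpT : exp (lam * T) = μ := by
    rw [div_mul_cancel₀ _ (ofReal_ne_zero.2 hT), exp_log hμ]
  have hu : (κ * exp (-(lam * τ))) ^ N = 1 := by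
    have : (N : ℂ) * -(lam * τ) = -(M * (lam * T)) := by
      have hc : (N : ℂ) * τ = M * T := mod_cast hcons
      linear_combination (-lam) * hc
    rw [mul_pow, ← exp_nat_mul, this, exp_neg, exp_nat_mul, hexpT, h,
      mul_inv_cancel₀ (pow_ne_zero _ hμ)]
  obtain ⟨l, hl, hleq⟩ := exists_mem_Icc_exp_eq_of_pow_eq_one hu
  refine ⟨l, hl, ?_⟩
  rw [exp_add, ← hleq, mul_left_comm, ← exp_add, add_neg_cancel, exp_zero, mul_one]

theorem exp_zpow_eq_mul (lam : ℂ) (φ τ t : ℝ) (m : ℤ) :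
    exp (lam * τ + I * φ) ^ m =
      exp (lam * t + I * ((m * φ : ℝ) : ℂ)) * exp (-(lam * ((t - m * τ : ℝ) : ℂ))) := by
  rw [← exp_int_mul, ← exp_add]
  congr 1
  push_cast
  ring

/-- `(n + 1).val` differs from `n.val + 1` by a multiple of `N` (at the wrap-around
`n.val = N - 1`), which the period `N * τ` absorbs. -/
theorem Function.Periodic.apply_add_sub_val_add_one_mul {α : Type*} {N : ℕ} [NeZero N] {τ : ℝ}
    {f : ℝ → α} (hf : Periodic f (N * τ)) (n : ZMod N) (t : ℝ) :
    f (t + τ - ((n + 1).val : ℝ) * τ) = f (t - (n.val : ℝ) * τ) := by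
  obtain ⟨m, hm⟩ : (N : ℤ) ∣ ((n + 1).val : ℤ) - (n.val + 1) :=
    (ZMod.intCast_eq_intCast_iff_dvd_sub _ _ _).1 <| by
      push_cast
      simp only [ZMod.natCast_zmod_val]
  have hm' : ((n + 1).val : ℝ) = n.val + 1 + N * m := by
    have := congrArg (Int.cast : ℤ → ℝ) hm
    push_cast at this
    linarith
  rw [hm', show t + τ - (n.val + 1 + N * m) * τ = (t - n.val * τ) + (-m : ℤ) * (N * τ) by
    push_cast; ring]
  exact hf.int_mul (-m) _


theorem mShift_eq_intCast (r : ℕ) (j : Fin (2 * r + 1)) :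
    mShift r j = ((((j : ℕ) : ℤ) - r : ℤ) : ℝ) := by
  simp [mShift]

section Jacobians

variable {d r : ℕ} {G : (Fin (2 * r + 1) → Fin d → ℝ) → Fin d → ℝ} {y : ℝ → Fin d → ℝ}
  {τ T : ℝ}

theorem continuous_Amat (hG : ContDiff ℝ 1 G) (hy : Continuous y) (j : Fin (2 * r + 1)) :
    Continuous fun t => Amat d r G y τ t j := by
  have hw : Continuous (waveArgs d r y τ) :=
    continuous_pi fun j => hy.comp (continuous_id.sub continuous_const)
  have hD := (hG.continuous_fderiv one_ne_zero).comp hw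
  refine continuous_pi fun i => continuous_pi fun k => ?_
  exact continuous_ofReal.comp ((continuous_apply i).comp (hD.clm_apply continuous_const))

theorem Amat_periodic (hy : Periodic y T) : Periodic (Amat d r G y τ) T := by
  intro t
  have : waveArgs d r y τ (t + T) = waveArgs d r y τ t := by
    funext j
    simp only [waveArgs, add_sub_right_comm t T, hy _]
  unfold Amat AmatR
  rw [this]

end Jacobians

/-- The right-hand side `z ↦ K(t) z` of the linear Floquet ODE, in the form used by
`IsFundamental`. -/
def floquetField (N d r : ℕ) (A : ℝ → Fin (2 * r + 1) → Matrix (Fin d) (Fin d) ℂ) (τ t : ℝ) :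
    (ZMod N × Fin d → ℂ) →ₗ[ℂ] (ZMod N × Fin d → ℂ) where
  toFun w p := (∑ j : Fin (2 * r + 1),
    A (t - ((p.1.val : ℕ) : ℝ) * τ) j *ᵥ fun k => w (p.1 + nodeOff N r j, k)) p.2
  map_add' w w' := by
    funext p
    simp only [Pi.add_apply, Finset.sum_apply, mulVec, dotProduct, mul_add,
      Finset.sum_add_distrib]
  map_smul' c w := by
    funext p
    simp only [Pi.smul_apply, Finset.sum_apply, mulVec, dotProduct, smul_eq_mul,
      Finset.mul_sum, RingHom.id_apply, mul_left_comm c]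

def bundleVec {N d : ℕ} (z : ZMod N → ℝ → Fin d → ℂ) (t : ℝ) : ZMod N × Fin d → ℂ :=
  fun p => z p.1 t p.2

section Floquet

variable {N d r : ℕ} {A : ℝ → Fin (2 * r + 1) → Matrix (Fin d) (Fin d) ℂ} {τ T : ℝ} {μ : ℂ}
  {z w : ZMod N → ℝ → Fin d → ℂ} {Ξ : ℝ → Matrix (ZMod N × Fin d) (ZMod N × Fin d) ℂ}
  {C : NNReal}

theorem continuous_floquetField_apply (hA : ∀ j, Continuous fun t => A t j)
    (v : ZMod N × Fin d → ℂ) : Continuous fun t => floquetField N d r A τ t v := by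
  refine continuous_pi fun p => ?_
  have hsum : Continuous fun t => ∑ j : Fin (2 * r + 1),
      A (t - ((p.1.val : ℕ) : ℝ) * τ) j *ᵥ fun k => v (p.1 + nodeOff N r j, k) :=
    continuous_finsetSum _ fun j _ =>
      ((hA j).comp (continuous_id.sub continuous_const)).matrix_mulVec continuous_const
  exact (continuous_apply p.2).comp hsum

theorem floquetField_periodic (hA : Periodic A T) : Periodic (floquetField N d r A τ) T := by
  intro t
  ext v p
  simp only [floquetField, LinearMap.coe_mk, AddHom.coe_mk, add_sub_right_comm t T, hA _]

theorem SatFloquet.hasDerivAt_bundleVec (hz : SatFloquet N d r A τ T μ z) (t : ℝ) :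
    HasDerivAt (bundleVec z) (floquetField N d r A τ t (bundleVec z t)) t :=
  hasDerivAt_pi.2 fun p => hasDerivAt_pi.1 (hz.1 p.1 t) p.2

theorem IsFundamental.eq_mulVec [NeZero N] (hΞ : IsFundamental N d r A τ Ξ)
    (hK : ∀ t, LipschitzWith C (floquetField N d r A τ t)) {f : ℝ → ZMod N × Fin d → ℂ}
    (hf : ∀ t, HasDerivAt f (floquetField N d r A τ t (f t)) t) (t : ℝ) :
    f t = Ξ t *ᵥ f 0 := by
  have h0 : f 0 = Ξ 0 *ᵥ f 0 := by rw [hΞ.1, one_mulVec]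
  exact congrFun (ODE_solution_unique_univ (s := fun _ => Set.univ)
    (fun t => (hK t).lipschitzOnWith) (fun t => ⟨hf t, trivial⟩)
    (fun t => ⟨hΞ.2 (f 0) t, trivial⟩) h0) t

theorem SatFloquet.exists_eq_smul [NeZero N] (hΞ : IsFundamental N d r A τ Ξ)
    (hK : ∀ t, LipschitzWith C (floquetField N d r A τ t)) (hs : IsSimpleEigenvalue (Ξ T) μ)
    (hz : SatFloquet N d r A τ T μ z) (hw : SatFloquet N d r A τ T μ w) (hz0 : z ≠ 0) :
    ∃ κ : ℂ, w = κ • z := by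
  have hrep {u} (hu : SatFloquet N d r A τ T μ u) (t : ℝ) :
      bundleVec u t = Ξ t *ᵥ bundleVec u 0 :=
    hΞ.eq_mulVec hK hu.hasDerivAt_bundleVec t
  have heig {u} (hu : SatFloquet N d r A τ T μ u) :
      Ξ T *ᵥ bundleVec u 0 = μ • bundleVec u 0 := by
    rw [← hrep hu T]
    funext p
    simpa [bundleVec] using congrFun (hu.2 p.1 0) p.2
  have hz0' : bundleVec z 0 ≠ 0 := by
    refine fun h => hz0 (funext fun n => funext fun t => funext fun k => ?_)
    simpa [bundleVec, h] using congrFun (hrep hz t) (n, k)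
  obtain ⟨κ, hκ⟩ := hs.exists_smul_eq (heig hz) (heig hw) hz0'
  refine ⟨κ, funext fun n => funext fun t => funext fun k => ?_⟩
  have := congrFun (hrep hw t) (n, k)
  rw [← hκ, mulVec_smul, ← hrep hz] at this
  exact this

theorem SatFloquet.shift [NeZero N] (hA : Periodic A (N * τ))
    (hz : SatFloquet N d r A τ T μ z) :
    SatFloquet N d r A τ T μ fun n t => z (n + 1) (t + τ) := by
  refine ⟨fun n t => ?_, fun n t => by
    simpa only [add_right_comm t T τ] using hz.2 (n + 1) (t + τ)⟩
  have h := (hz.1 (n + 1) (t + τ)).comp_add_const t τ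
  simpa only [hA.apply_add_sub_val_add_one_mul, add_right_comm n 1] using h

theorem SatFloquet.exists_shift_eq_smul [NeZero N] (hΞ : IsFundamental N d r A τ Ξ)
    (hK : ∀ t, LipschitzWith C (floquetField N d r A τ t)) (hs : IsSimpleEigenvalue (Ξ T) μ)
    (hA : Periodic A (N * τ)) (hz : SatFloquet N d r A τ T μ z) (hz0 : z ≠ 0) :
    ∃ κ : ℂ, κ ≠ 0 ∧ ∀ n t, z (n + 1) (t + τ) = κ • z n t := by
  obtain ⟨κ, hκ⟩ := hz.exists_eq_smul hΞ hK hs (hz.shift hA) hz0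
  have hstep n t : z (n + 1) (t + τ) = κ • z n t := congrFun (congrFun hκ n) t
  refine ⟨κ, fun h0 => hz0 (funext fun n => funext fun t => ?_), hstep⟩
  simpa [h0] using hstep (n - 1) (t - τ)

theorem SatFloquet.pow_eq_pow_of_shift [NeZero N] {M : ℕ} (hcons : (N : ℝ) * τ = M * T)
    (hz : SatFloquet N d r A τ T μ z) (hz0 : z ≠ 0) {κ : ℂ} (hκ : κ ≠ 0)
    (hstep : ∀ n t, z (n + 1) (t + τ) = κ • z n t) : κ ^ N = μ ^ M := by
  have hzpow := eq_zpow_smul_of_add_one hκ hstep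
  obtain ⟨s, hs⟩ : ∃ s, z 0 s ≠ 0 := by
    by_contra! h
    refine hz0 (funext fun n => funext fun t => ?_)
    rw [← ZMod.natCast_zmod_val n, ← Int.cast_natCast, hzpow, h, smul_zero, Pi.zero_apply,
      Pi.zero_apply]
  refine smul_left_injective ℂ hs ?_
  have hN := hzpow N (s + N * τ)
  rw [Int.cast_natCast, ZMod.natCast_self, Int.cast_natCast, add_sub_cancel_right, hcons,
    apply_add_nat_mul_eq_pow_smul (hz.2 0)] at hN
  simpa [zpow_natCast] using hN.symm

theorem satMSE_of_eq_exp_smul {lam : ℂ} {φ : ℝ}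
    (hz : ∀ t, HasDerivAt (z 0) (∑ j, A t j *ᵥ z (nodeOff N r j) t) t)
    (hrep : ∀ (m : ℤ) t, z m t = exp (lam * t + I * ((m * φ : ℝ) : ℂ)) •
      (exp (-(lam * ((t - m * τ : ℝ) : ℂ))) • z 0 (t - m * τ))) :
    SatMSE d r A τ lam φ fun t => exp (-(lam * t)) • z 0 t := by
  intro t
  have hexp : HasDerivAt (fun s : ℝ => exp (-(lam * s))) (-lam * exp (-(lam * t))) t := by
    simpa [mul_comm] using ((hasDerivAt_id t).ofReal_comp.const_mul lam).neg.cexp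
  have hterm (j : Fin (2 * r + 1)) :
      exp (I * ((mShift r j * φ : ℝ) : ℂ)) • A t j *ᵥ
          (exp (-(lam * ((t - mShift r j * τ : ℝ) : ℂ))) • z 0 (t - mShift r j * τ)) =
        exp (-(lam * t)) • A t j *ᵥ z (nodeOff N r j) t := by
    rw [nodeOff, hrep, ← mShift_eq_intCast]
    simp only [mulVec_smul, smul_smul, ← exp_add]
    congr 2
    push_cast
    ring
  refine (hexp.smul (hz t)).congr_deriv ?_
  simp only [Finset.smul_sum, ← hterm, smul_smul]
  exact add_comm _ _

theorem SatFloquet.exists_planeWave [NeZero N] {lam : ℂ} {φ : ℝ}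
    (hz : SatFloquet N d r A τ T μ z) (hzC1 : ContDiff ℝ 1 (z 0)) (hz0 : z ≠ 0)
    (hμ : exp (lam * T) = μ) (hstep : ∀ n t, z (n + 1) (t + τ) = exp (lam * τ + I * φ) • z n t) :
    ∃ ζ : ℝ → Fin d → ℂ, ζ ≠ 0 ∧ (∀ t, ζ (t + T) = ζ t) ∧ ContDiff ℝ 1 ζ ∧
      SatMSE d r A τ lam φ ζ ∧ ∀ (n : ZMod N) (t : ℝ), z n t = pwave d lam φ τ ζ n.val t := by
  have hrep (m : ℤ) (t : ℝ) : z m t = exp (lam * t + I * ((m * φ : ℝ) : ℂ)) •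
      (exp (-(lam * ((t - m * τ : ℝ) : ℂ))) • z 0 (t - m * τ)) := by
    rw [eq_zpow_smul_of_add_one (exp_ne_zero _) hstep, exp_zpow_eq_mul lam φ τ t, mul_smul]
  have hpw (n : ZMod N) (t : ℝ) :
      z n t = pwave d lam φ τ (fun t => exp (-(lam * t)) • z 0 t) n.val t := by
    have := hrep n.val t
    rwa [Int.cast_natCast, ZMod.natCast_zmod_val, Int.cast_natCast] at this
  refine ⟨fun t => exp (-(lam * t)) • z 0 t, fun h => hz0 ?_, fun t => ?_, ?_,
    satMSE_of_eq_exp_smul (fun t => by simpa using hz.1 0 t) hrep, hpw⟩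
  · funext n t k
    rw [hpw, h]
    simp [pwave]
  · beta_reduce
    rw [hz.2 0 t, smul_smul, ← hμ, ← exp_add]
    congr 2
    push_cast
    ring
  · have hexp : ContDiff ℝ 1 fun t : ℝ => exp (-(lam * t)) :=
      contDiff_exp.comp (contDiff_const.mul ofRealCLM.contDiff).neg
    exact hexp.smul hzC1

end Floquet

theorem exp_I_eq_of_pwave_eq {d : ℕ} {lam : ℂ} {φ φ' τ : ℝ} {ζ ζ' : ℝ → Fin d → ℂ}
    (hζ : ζ ≠ 0) (h0 : ∀ t, pwave d lam φ τ ζ 0 t = pwave d lam φ' τ ζ' 0 t)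
    (h1 : ∀ t, pwave d lam φ τ ζ 1 t = pwave d lam φ' τ ζ' 1 t) :
    exp (I * φ) = exp (I * φ') := by
  have hζζ' : ζ = ζ' := by
    funext t k
    simpa [pwave] using congrFun (h0 t) k
  obtain ⟨s, k, hs⟩ : ∃ s k, ζ s k ≠ 0 := by
    by_contra! h
    exact hζ (funext fun s => funext (h s))
  have := congrFun (h1 (s + τ)) k
  simp only [pwave, ← hζζ', Nat.cast_one, one_mul, add_sub_cancel_right, exp_add] at this
  exact mul_left_cancel₀ (exp_ne_zero _) (mul_right_cancel₀ hs this)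

theorem simple_floquet_representation_general
    (N d r M : ℕ) [NeZero N] (hN : 2 ≤ N) (hM : 0 < M)
    (T τ : ℝ) (hT : 0 < T) (hcons : (N : ℝ) * τ = (M : ℝ) * T)
    (G : (Fin (2 * r + 1) → Fin d → ℝ) → Fin d → ℝ) (hG : ContDiff ℝ 1 G)
    (y : ℝ → Fin d → ℝ) (hyC1 : ContDiff ℝ 1 y) (hyper : ∀ t, y (t + T) = y t)
    (Ξ : ℝ → Matrix (ZMod N × Fin d) (ZMod N × Fin d) ℂ)
    (hΞ : IsFundamental N d r (Amat d r G y τ) τ Ξ)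
    (μ : ℂ) (hsimple : IsSimpleEigenvalue (Ξ T) μ)
    (z : ZMod N → ℝ → Fin d → ℂ) (hzC1 : ∀ n, ContDiff ℝ 1 (z n)) (hzne : z ≠ 0)
    (hz : SatFloquet N d r (Amat d r G y τ) τ T μ z) :
    ∃! l : ℕ, (1 ≤ l ∧ l ≤ N) ∧ ∃ ζ : ℝ → Fin d → ℂ,
      ζ ≠ 0 ∧ (∀ t, ζ (t + T) = ζ t) ∧ ContDiff ℝ 1 ζ ∧
      SatMSE d r (Amat d r G y τ) τ (Complex.log μ / (T : ℂ))
        (2 * Real.pi * (l : ℝ) / (N : ℝ)) ζ ∧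
      ∀ (n : ZMod N) (t : ℝ),
        z n t = pwave d (Complex.log μ / (T : ℂ))
          (2 * Real.pi * (l : ℝ) / (N : ℝ)) τ ζ n.val t := by
  have : Fact (1 < N) := ⟨hN⟩
  have hA : Periodic (Amat d r G y τ) T := Amat_periodic hyper
  obtain ⟨C, hK⟩ := exists_lipschitzWith_of_periodic (F := floquetField N d r _ τ)
    (continuous_floquetField_apply (continuous_Amat hG hyC1.continuous))
    (floquetField_periodic hA) hT.ne'
  obtain ⟨κ, hκ0, hstep⟩ := hz.exists_shift_eq_smul hΞ hK hsimple
    (by rw [hcons]; exact hA.nat_mul M) hzne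
  have hκμ := hz.pow_eq_pow_of_shift hcons hzne hκ0 hstep
  have hμ0 : μ ≠ 0 := by
    rintro rfl
    exact pow_ne_zero N hκ0 (hκμ.trans (zero_pow hM.ne'))
  obtain ⟨l, hl, rfl⟩ := exists_eq_exp_of_pow_eq_pow hμ0 hT.ne' hcons hκμ
  have hexpT : exp (log μ / T * T) = μ := by
    rw [div_mul_cancel₀ _ (ofReal_ne_zero.2 hT.ne'), exp_log hμ0]
  obtain ⟨ζ, hζ0, hζper, hζC1, hζMSE, hrep⟩ := hz.exists_planeWave (hzC1 0) hzne hexpT hstep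
  refine ⟨l, ⟨hl, ζ, hζ0, hζper, hζC1, hζMSE, hrep⟩,
    fun l' ⟨hl', ζ', hζ'0, _, _, _, hrep'⟩ => ?_⟩
  refine injOn_exp_two_pi_div N hl' hl (exp_I_eq_of_pwave_eq (lam := log μ / T) (τ := τ)
    (ζ' := ζ) hζ'0 (fun t => ?_) (fun t => ?_))
  · simpa using (hrep' 0 t).symm.trans (hrep 0 t)
  · simpa [ZMod.val_one] using (hrep' 1 t).symm.trans (hrep 1 t)

/-- A simple Floquet multiplier `μ*` of the DTW, with bundle `z*`,
admits a unique `l* ∈ {1,…,N}` and a nonzero `T`-periodic `C¹` function `ζ*` such that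
`(Log μ*/T, 2πl*/N, ζ*)` solves the master stability equation and
`z*_n(t) = ζ*(t−nτ) e^{λ* t + i n φ*}`. -/
theorem simple_floquet_representation
    (N d r M : ℕ) [NeZero N] (hN : 2 ≤ N) (hd : 1 ≤ d) (hr : 1 ≤ r) (hM : 0 < M)
    (T τ : ℝ) (hT : 0 < T) (hτ : 0 < τ) (hcons : (N : ℝ) * τ = (M : ℝ) * T)
    (G : (Fin (2 * r + 1) → Fin d → ℝ) → Fin d → ℝ) (hG : ContDiff ℝ 1 G)
    (y : ℝ → Fin d → ℝ) (hyC1 : ContDiff ℝ 1 y) (hyper : ∀ t, y (t + T) = y t)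
    (hyprof : SatProfile d r G y τ)
    (Ξ : ℝ → Matrix (ZMod N × Fin d) (ZMod N × Fin d) ℂ)
    (hΞ : IsFundamental N d r (Amat d r G y τ) τ Ξ)
    (μ : ℂ) (hsimple : IsSimpleEigenvalue (Ξ T) μ)
    (z : ZMod N → ℝ → Fin d → ℂ) (hzC1 : ∀ n, ContDiff ℝ 1 (z n)) (hzne : z ≠ 0)
    (hz : SatFloquet N d r (Amat d r G y τ) τ T μ z) :
    ∃! l : ℕ, (1 ≤ l ∧ l ≤ N) ∧ ∃ ζ : ℝ → Fin d → ℂ,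
      ζ ≠ 0 ∧ (∀ t, ζ (t + T) = ζ t) ∧ ContDiff ℝ 1 ζ ∧
      SatMSE d r (Amat d r G y τ) τ (Complex.log μ / (T : ℂ))
        (2 * Real.pi * (l : ℝ) / (N : ℝ)) ζ ∧
      ∀ (n : ZMod N) (t : ℝ),
        z n t = pwave d (Complex.log μ / (T : ℂ))
          (2 * Real.pi * (l : ℝ) / (N : ℝ)) τ ζ n.val t :=
  simple_floquet_representation_general N d r M hN hM T τ hT hcons G hG y hyC1 hyper Ξ hΞ μ hsimple
    z hzC1 hzne hz

end
end

section
/- Assume Nτ = MT for a positive integer M, fix λ ∈ ℂ and φ = 2πl/N for some l ∈ {1,…,N}, and let the matrices A_m be continuous. The set S of T-periodic C¹ solutions ζ : ℝ → ℂ^d of the master stability equation at (λ, φ) is a ℂ-linear subspace, and the linear map S → (ℂ^d)^N sending ζ to the vector (ζ(−τ), ζ(−2τ), …, ζ(−Nτ)) is injective; consequently, the solution space S has complex dimension at most N·d. -/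
noncomputable section

/-!
Sample a solution `ζ` of the master stability equation at the `N` delays: `z(t) ∈ (ℂ^d)^N` with
components `ζ(t − τ), …, ζ(t − Nτ)`. Since `Nτ = MT`, `ζ` is `Nτ`-periodic, so every delayed
value `ζ(t − nτ − mτ)` in the equation is again a component of `z(t)`, with node index `n + m`
read modulo `N`. Hence `z` solves a linear ODE `z' = B(t) z` with continuous coefficients, and is
determined by `z(0) = (ζ(−τ), …, ζ(−Nτ))`: this evaluation is injective on the solution space,
whose dimension is therefore at most `N d`.
-/

open Function Set Matrix

theorem linearODE_eq_zero_of_eq_zero {E 𝕜 : Type*} [NormedAddCommGroup E] [NormedSpace ℝ E]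
    [NontriviallyNormedField 𝕜] [NormedSpace 𝕜 E] {L : ℝ → E →L[𝕜] E} (hL : Continuous L)
    {x : ℝ → E} (hx : ∀ t, HasDerivAt x (L t (x t)) t) {t₀ : ℝ} (h₀ : x t₀ = 0) : x = 0 := by
  funext t
  obtain ⟨a, b, ht, ht₀⟩ : ∃ a b, t ∈ Ioo a b ∧ t₀ ∈ Ioo a b :=
    ⟨min t t₀ - 1, max t t₀ + 1, by grind, by grind⟩
  obtain ⟨K, hK⟩ := isCompact_Icc.exists_bound_of_continuousOn (hL.continuousOn (s := Icc a b))
  refine ODE_solution_unique_of_mem_Ioo (K := K.toNNReal) (s := fun _ => univ) (g := 0)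
    (fun s hs => ((L s).lipschitz.weaken ?_).lipschitzOnWith) ht₀ (fun s _ => ⟨hx s, trivial⟩)
    (fun s _ => ⟨by simp, trivial⟩) h₀ ht
  rw [← norm_toNNReal]
  exact Real.toNNReal_le_toNNReal (hK s (Ioo_subset_Icc_self hs))

theorem Matrix.linearODE_eq_zero_of_eq_zero {ι 𝕜 : Type*} [Fintype ι] [RCLike 𝕜]
    {B : ℝ → Matrix ι ι 𝕜} (hB : Continuous B) {x : ℝ → ι → 𝕜}
    (hx : ∀ t, HasDerivAt x (B t *ᵥ x t) t) {t₀ : ℝ} (h₀ : x t₀ = 0) : x = 0 :=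
  _root_.linearODE_eq_zero_of_eq_zero
    (L := fun t => LinearMap.toContinuousLinearMap (B t).mulVecLin)
    (continuous_clm_apply.2 fun _ => hB.matrix_mulVec continuous_const) hx h₀

theorem Function.Periodic.apply_sub_intCast_mul {α : Type*} {f : ℝ → α} {N : ℕ} [NeZero N]
    {τ : ℝ} (hf : Periodic f (N * τ)) (s : ℝ) (a : ℤ) :
    f (s - a * τ) = f (s - ((a : ZMod N).val : ℝ) * τ) := by
  have ha : (a : ℝ) = ((a : ZMod N).val : ℝ) + ((a / N : ℤ) : ℝ) * N := by
    have := Int.emod_add_mul_ediv a N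
    rw [← ZMod.val_intCast] at this
    exact_mod_cast (by linarith : a = _)
  calc f (s - a * τ) = f (s - ((a : ZMod N).val : ℝ) * τ - ((a / N : ℤ) : ℝ) * (N * τ)) := by
        rw [ha]; ring_nf
    _ = _ := hf.sub_int_mul_eq _

/-- The paper's bundle `z_n(t) = ζ(t − nτ) e^{λt + inφ}` without the exponential factor, with
nodes `n = 1, …, N` stored at `n - 1 : ZMod N`, so that `z(0)` lists `ζ(−τ), …, ζ(−Nτ)`. -/
def mseBundle (N d : ℕ) (τ : ℝ) (ζ : ℝ → Fin d → ℂ) (t : ℝ) : ZMod N × Fin d → ℂ :=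
  fun p => ζ (t - ((p.1.val : ℝ) + 1) * τ) p.2

def mseCouplingMatrix (N d r : ℕ) (A : ℝ → Fin (2 * r + 1) → Matrix (Fin d) (Fin d) ℂ) (τ : ℝ)
    (j : Fin (2 * r + 1)) (t : ℝ) : Matrix (ZMod N × Fin d) (ZMod N × Fin d) ℂ :=
  of fun p q => if q.1 = p.1 + nodeOff N r j then A (t - ((p.1.val : ℝ) + 1) * τ) j p.2 q.2 else 0

def mseBundleMatrix (N d r : ℕ) (A : ℝ → Fin (2 * r + 1) → Matrix (Fin d) (Fin d) ℂ) (τ : ℝ)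
    (lam : ℂ) (φ : ℝ) (t : ℝ) : Matrix (ZMod N × Fin d) (ZMod N × Fin d) ℂ :=
  -lam • 1 + ∑ j : Fin (2 * r + 1),
    Complex.exp (Complex.I * ((mShift r j * φ : ℝ) : ℂ)) • mseCouplingMatrix N d r A τ j t

section MSEBundle

variable {N d r : ℕ} {A : ℝ → Fin (2 * r + 1) → Matrix (Fin d) (Fin d) ℂ} {τ : ℝ}
  {lam : ℂ} {φ : ℝ}

theorem mseCouplingMatrix_mulVec [NeZero N] (j : Fin (2 * r + 1)) (t : ℝ)
    (x : ZMod N × Fin d → ℂ) (p : ZMod N × Fin d) :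
    (mseCouplingMatrix N d r A τ j t *ᵥ x) p =
      (A (t - ((p.1.val : ℝ) + 1) * τ) j *ᵥ fun k => x (p.1 + nodeOff N r j, k)) p.2 := by
  simp only [mseCouplingMatrix, mulVec, dotProduct, of_apply, Fintype.sum_prod_type, ite_mul,
    zero_mul]
  rw [Finset.sum_comm]
  simp

theorem continuous_mseCouplingMatrix (hA : ∀ j, Continuous fun t => A t j) (j : Fin (2 * r + 1)) :
    Continuous (mseCouplingMatrix N d r A τ j) := by
  refine continuous_pi fun p => continuous_pi fun q => ?_
  simp only [mseCouplingMatrix, of_apply]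
  split_ifs
  · exact ((hA j).comp (continuous_sub_right _)).matrix_elem p.2 q.2
  · exact continuous_const

theorem continuous_mseBundleMatrix (hA : ∀ j, Continuous fun t => A t j) :
    Continuous (mseBundleMatrix N d r A τ lam φ) := by
  have := continuous_mseCouplingMatrix (N := N) (τ := τ) hA
  unfold mseBundleMatrix
  fun_prop

theorem mseBundle_sub_mShift [NeZero N] {ζ : ℝ → Fin d → ℂ} (hζ : Periodic ζ (N * τ)) (t : ℝ)
    (n : ZMod N) (j : Fin (2 * r + 1)) :
    ζ (t - ((n.val : ℝ) + 1) * τ - mShift r j * τ) =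
      fun k => mseBundle N d τ ζ t (n + nodeOff N r j, k) := by
  have key := hζ.apply_sub_intCast_mul (t - τ) (n.val + ((j : ℕ) - r : ℤ))
  have hcast : ((n.val + ((j : ℕ) - r : ℤ) : ℤ) : ZMod N) = n + nodeOff N r j := by
    simp [nodeOff]
  rw [hcast] at key
  calc ζ (t - ((n.val : ℝ) + 1) * τ - mShift r j * τ)
      = ζ (t - τ - ((n.val + ((j : ℕ) - r : ℤ) : ℤ) : ℝ) * τ) := by
        congr 1; push_cast [mShift]; ring
    _ = ζ (t - τ - ((n + nodeOff N r j).val : ℝ) * τ) := key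
    _ = ζ (t - (((n + nodeOff N r j).val : ℝ) + 1) * τ) := by congr 1; ring

theorem hasDerivAt_mseBundle [NeZero N] {ζ : ℝ → Fin d → ℂ} (hper : Periodic ζ (N * τ))
    (hζ : SatMSE d r A τ lam φ ζ) (t : ℝ) :
    HasDerivAt (mseBundle N d τ ζ)
      (mseBundleMatrix N d r A τ lam φ t *ᵥ mseBundle N d τ ζ t) t := by
  refine hasDerivAt_pi.2 fun p => ?_
  refine (hasDerivAt_pi.1 ((hζ _).comp_sub_const t (((p.1.val : ℝ) + 1) * τ)) p.2).congr_deriv ?_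
  simp only [mseBundleMatrix, add_mulVec, smul_mulVec, one_mulVec, sum_mulVec, Pi.add_apply,
    Pi.smul_apply, Finset.sum_apply, mseCouplingMatrix_mulVec, mseBundle_sub_mShift hper]
  rfl

theorem eq_zero_of_satMSE_of_eq_zero [NeZero N] {ζ : ℝ → Fin d → ℂ}
    (hA : ∀ j, Continuous fun t => A t j) (hper : Periodic ζ (N * τ))
    (hζ : SatMSE d r A τ lam φ ζ) (h₀ : ∀ i : Fin N, ζ (-(((i : ℕ) : ℝ) + 1) * τ) = 0) :
    ζ = 0 := by
  have hz₀ : mseBundle N d τ ζ 0 = 0 := funext fun p => by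
    simpa only [mseBundle, zero_sub, neg_mul, Pi.zero_apply]
      using congrFun (h₀ ⟨p.1.val, p.1.val_lt⟩) p.2
  have hz : mseBundle N d τ ζ = 0 :=
    Matrix.linearODE_eq_zero_of_eq_zero (continuous_mseBundleMatrix hA)
      (hasDerivAt_mseBundle hper hζ) hz₀
  funext t k
  simpa [mseBundle] using congrFun (congrFun hz (t + τ)) (0, k)

end MSEBundle

section MSESolutions

variable {d r : ℕ} {A : ℝ → Fin (2 * r + 1) → Matrix (Fin d) (Fin d) ℂ} {τ : ℝ} {lam : ℂ} {φ : ℝ}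

theorem SatMSE.add {ζ₁ ζ₂ : ℝ → Fin d → ℂ} (h₁ : SatMSE d r A τ lam φ ζ₁)
    (h₂ : SatMSE d r A τ lam φ ζ₂) : SatMSE d r A τ lam φ (ζ₁ + ζ₂) := fun t =>
  ((h₁ t).add (h₂ t)).congr_deriv <| by
    simp only [Pi.add_apply, mulVec_add, smul_add, Finset.sum_add_distrib]
    abel

theorem SatMSE.const_smul {ζ : ℝ → Fin d → ℂ} (c : ℂ) (h : SatMSE d r A τ lam φ ζ) :
    SatMSE d r A τ lam φ (c • ζ) := fun t =>
  ((h t).const_smul c).congr_deriv <| by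
    simp only [Pi.smul_apply, mulVec_smul, smul_add, Finset.smul_sum, smul_comm c]

theorem satMSE_zero : SatMSE d r A τ lam φ 0 := fun t =>
  (hasDerivAt_const t 0).congr_deriv <| by simp

end MSESolutions

def mseSolutions (d r : ℕ) (A : ℝ → Fin (2 * r + 1) → Matrix (Fin d) (Fin d) ℂ) (τ T : ℝ)
    (lam : ℂ) (φ : ℝ) : Submodule ℂ (ℝ → Fin d → ℂ) where
  carrier := {ζ | ContDiff ℝ 1 ζ ∧ (∀ t, ζ (t + T) = ζ t) ∧ SatMSE d r A τ lam φ ζ}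
  add_mem' h₁ h₂ := ⟨h₁.1.add h₂.1, fun t => by simp only [Pi.add_apply, h₁.2.1 t, h₂.2.1 t],
    h₁.2.2.add h₂.2.2⟩
  zero_mem' := ⟨contDiff_const, fun _ => rfl, satMSE_zero⟩
  smul_mem' c _ h := ⟨h.1.const_smul c, fun t => by simp only [Pi.smul_apply, h.2.1 t],
    h.2.2.const_smul c⟩

def mseEval (N d : ℕ) (τ : ℝ) : (ℝ → Fin d → ℂ) →ₗ[ℂ] Fin N → Fin d → ℂ :=
  LinearMap.pi fun i => LinearMap.proj (-(((i : ℕ) : ℝ) + 1) * τ)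

theorem injective_mseEval_domRestrict {N d r M : ℕ} [NeZero N] {τ T : ℝ}
    (hcons : (N : ℝ) * τ = M * T) {A : ℝ → Fin (2 * r + 1) → Matrix (Fin d) (Fin d) ℂ}
    (hA : ∀ j, Continuous fun t => A t j) (lam : ℂ) (φ : ℝ) :
    Injective ((mseEval N d τ).domRestrict (mseSolutions d r A τ T lam φ)) := by
  rw [← LinearMap.ker_eq_bot, LinearMap.ker_eq_bot']
  intro ζ h₀
  obtain ⟨-, hper, hζ⟩ := ζ.2
  have hper' : Periodic ζ.1 (N * τ) := hcons ▸ Periodic.nat_mul hper M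
  exact Subtype.ext (eq_zero_of_satMSE_of_eq_zero hA hper' hζ fun i => congrFun h₀ i)

theorem mse_solution_space_finite_dimensional_general
    (N d r M : ℕ) (hN : 2 ≤ N)
    (τ T : ℝ) (hcons : (N : ℝ) * τ = (M : ℝ) * T)
    (A : ℝ → Fin (2 * r + 1) → Matrix (Fin d) (Fin d) ℂ)
    (hAcont : ∀ j, Continuous (fun t => A t j))
    (lam : ℂ)
    (φ : ℝ) :
    ∃ S : Submodule ℂ (ℝ → Fin d → ℂ),
      (S : Set (ℝ → Fin d → ℂ)) =
        {ζ | ContDiff ℝ 1 ζ ∧ (∀ t, ζ (t + T) = ζ t) ∧ SatMSE d r A τ lam φ ζ} ∧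
      (∀ ζ₁ ∈ S, ∀ ζ₂ ∈ S,
        (∀ i : Fin N, ζ₁ (-(((i : ℕ) : ℝ) + 1) * τ) = ζ₂ (-(((i : ℕ) : ℝ) + 1) * τ)) →
          ζ₁ = ζ₂) ∧
      Module.rank ℂ S ≤ ((N * d : ℕ) : Cardinal) := by
  have : NeZero N := ⟨by omega⟩
  have hinj := injective_mseEval_domRestrict hcons hAcont lam φ
  refine ⟨mseSolutions d r A τ T lam φ, rfl,
    fun ζ₁ h₁ ζ₂ h₂ h => congrArg Subtype.val (@hinj ⟨ζ₁, h₁⟩ ⟨ζ₂, h₂⟩ (funext h)), ?_⟩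
  calc _ ≤ Module.rank ℂ (Fin N → Fin d → ℂ) := LinearMap.rank_le_of_injective _ hinj
    _ = ((N * d : ℕ) : Cardinal) := by simp

/-- For fixed `λ` and `φ = 2πl/N` (with `Nτ = MT`), the set of
`T`-periodic `C¹` solutions of the master stability equation is a ℂ-linear subspace,
the evaluation map `ζ ↦ (ζ(−τ), …, ζ(−Nτ))` is injective on it, and hence its
dimension is at most `N·d`. -/
theorem mse_solution_space_finite_dimensional
    (N d r M : ℕ) (hN : 2 ≤ N) (hd : 1 ≤ d) (hr : 1 ≤ r) (hM : 0 < M)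
    (τ T : ℝ) (hτ : 0 < τ) (hT : 0 < T) (hcons : (N : ℝ) * τ = (M : ℝ) * T)
    (A : ℝ → Fin (2 * r + 1) → Matrix (Fin d) (Fin d) ℂ)
    (hAcont : ∀ j, Continuous (fun t => A t j))
    (hAper : ∀ (t : ℝ) (j : Fin (2 * r + 1)), A (t + T) j = A t j)
    (lam : ℂ) (l : ℕ) (hl1 : 1 ≤ l) (hlN : l ≤ N)
    (φ : ℝ) (hφ : φ = 2 * Real.pi * (l : ℝ) / (N : ℝ)) :
    ∃ S : Submodule ℂ (ℝ → Fin d → ℂ),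
      (S : Set (ℝ → Fin d → ℂ)) =
        {ζ | ContDiff ℝ 1 ζ ∧ (∀ t, ζ (t + T) = ζ t) ∧ SatMSE d r A τ lam φ ζ} ∧
      (∀ ζ₁ ∈ S, ∀ ζ₂ ∈ S,
        (∀ i : Fin N, ζ₁ (-(((i : ℕ) : ℝ) + 1) * τ) = ζ₂ (-(((i : ℕ) : ℝ) + 1) * τ)) →
          ζ₁ = ζ₂) ∧
      Module.rank ℂ S ≤ ((N * d : ℕ) : Cardinal) :=
  mse_solution_space_finite_dimensional_general N d r M hN τ T hcons A hAcont lam φ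

end
end

section
/- Let y : ℝ → ℝ^d be a C¹, T-periodic solution of the profile equation y'(t) = G(y(t+rτ), …, y(t), …, y(t−rτ)) with τ > 0, and suppose N₀τ = M₀T for positive integers M₀ and N₀. Then for every positive integer K, setting N = K·N₀, the functions x_n(t) := y(t−nτ), n = 1,…,N (node indices modulo N), form a solution of the network system of size N; i.e., the same profile y, with the same period T, delay τ and wave number k = τ/T, yields a discrete traveling wave in every network of size K·N₀. -/
noncomputable section

/-! The network equation at node `n` is the profile equation at time `t − nτ`, once the
argument `y(t − (n + m)τ)` with integer `n + m` is rewritten with the representative of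
`n + m` in `{0, …, N − 1}`; the two differ by a multiple of `N`, hence the arguments by a
multiple of `Nτ = K M₀ T`, a period of `y`. -/

open Function

theorem Function.Periodic.apply_sub_intCast_mul_eq_zmod_val {β : Type*} {f : ℝ → β} {N : ℕ}
    [NeZero N] {τ : ℝ} (hf : Periodic f (N * τ)) (t : ℝ) (a : ℤ) :
    f (t - a * τ) = f (t - ((a : ZMod N).val : ℝ) * τ) := by
  have hval : (((a : ZMod N).val : ℕ) : ℝ) = ((a % N : ℤ) : ℝ) := by
    exact_mod_cast ZMod.val_intCast a
  have hsplit : t - a * τ = (t - ((a % N : ℤ) : ℝ) * τ) - ((a / N : ℤ) : ℝ) * (N * τ) := by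
    conv_lhs => rw [← Int.emod_add_mul_ediv a N]
    push_cast
    ring
  rw [hsplit, hf.sub_int_mul_eq, hval]

theorem waveArgs_sub_val_mul_eq {d r N : ℕ} [NeZero N] {y : ℝ → Fin d → ℝ} {τ : ℝ}
    (hy : Periodic y (N * τ)) (n : ZMod N) (t : ℝ) :
    waveArgs d r y τ (t - n.val * τ) =
      fun j => y (t - ((n + nodeOff N r j).val : ℝ) * τ) := by
  funext j
  have hnode : n + nodeOff N r j = (((n.val + j : ℕ) : ℤ) - r : ℤ) := by
    push_cast [nodeOff, ZMod.natCast_val, ZMod.cast_id']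
    ring
  rw [hnode, ← hy.apply_sub_intCast_mul_eq_zmod_val]
  simp only [waveArgs]
  push_cast
  ring_nf

theorem SatProfile.hasDerivAt_node_of_periodic {d r N : ℕ} [NeZero N]
    {G : (Fin (2 * r + 1) → Fin d → ℝ) → Fin d → ℝ} {y : ℝ → Fin d → ℝ} {τ : ℝ}
    (hprof : SatProfile d r G y τ) (hy : Periodic y (N * τ)) (n : ZMod N) (t : ℝ) :
    HasDerivAt (fun s => y (s - (n.val : ℝ) * τ))
      (G (fun j => y (t - (((n + nodeOff N r j).val : ℕ) : ℝ) * τ))) t := by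
  rw [← waveArgs_sub_val_mul_eq hy]
  exact (hprof _).comp_sub_const t _

theorem profile_embeds_in_all_multiples_general
    (d r N₀ M₀ : ℕ) (hN₀ : 0 < N₀)
    (G : (Fin (2 * r + 1) → Fin d → ℝ) → Fin d → ℝ)
    (τ T : ℝ) (hcons : (N₀ : ℝ) * τ = (M₀ : ℝ) * T)
    (y : ℝ → Fin d → ℝ) (hyper : ∀ t, y (t + T) = y t)
    (hyprof : SatProfile d r G y τ) :
    ∀ K : ℕ, 0 < K →
      ∀ (n : ZMod (K * N₀)) (t : ℝ),
        HasDerivAt (fun s => y (s - (n.val : ℝ) * τ))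
          (G (fun j => y (t - (((n + nodeOff (K * N₀) r j).val : ℕ) : ℝ) * τ))) t := by
  intro K hK
  have : NeZero (K * N₀) := ⟨(Nat.mul_pos hK hN₀).ne'⟩
  have hNτ : ((K * N₀ : ℕ) : ℝ) * τ = ((K * M₀ : ℕ) : ℝ) * T := by
    push_cast
    rw [mul_assoc, hcons, mul_assoc]
  have hper : Periodic y ((K * N₀ : ℕ) * τ) := hNτ ▸ Periodic.nat_mul hyper (K * M₀)
  exact hyprof.hasDerivAt_node_of_periodic hper

/-- A `T`-periodic solution `y` of the profile equation with
`N₀τ = M₀T` yields, for every `K ≥ 1`, a discrete traveling wave `x_n(t) = y(t−nτ)`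
in the network of size `N = K·N₀`, with the same profile, period, delay and wave
number. -/
theorem profile_embeds_in_all_multiples
    (d r N₀ M₀ : ℕ) (hd : 1 ≤ d) (hr : 1 ≤ r) (hN₀ : 0 < N₀) (hM₀ : 0 < M₀)
    (G : (Fin (2 * r + 1) → Fin d → ℝ) → Fin d → ℝ) (hG : ContDiff ℝ 1 G)
    (τ T : ℝ) (hτ : 0 < τ) (hT : 0 < T) (hcons : (N₀ : ℝ) * τ = (M₀ : ℝ) * T)
    (y : ℝ → Fin d → ℝ) (hyC1 : ContDiff ℝ 1 y) (hyper : ∀ t, y (t + T) = y t)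
    (hyprof : SatProfile d r G y τ) :
    ∀ K : ℕ, 0 < K →
      ∀ (n : ZMod (K * N₀)) (t : ℝ),
        HasDerivAt (fun s => y (s - (n.val : ℝ) * τ))
          (G (fun j => y (t - (((n + nodeOff (K * N₀) r j).val : ℕ) : ℝ) * τ))) t :=
  profile_embeds_in_all_multiples_general d r N₀ M₀ hN₀ G τ T hcons y hyper hyprof

end
end

section
/- Let y : ℝ → ℝ^d be a C¹, T-periodic solution of the profile equation with τ > 0 and N₀τ = M₀T for positive integers M₀, N₀, and let A_m(t) = D_{r+m+1}G(y(t+rτ), …, y(t), …, y(t−rτ)) for |m| ≤ r. Suppose (λ, φ, ζ) satisfies the master stability equation with ζ nonzero T-periodic, and suppose e^{iφ} is a (K·N₀)-th root of unity for some positive integer K, i.e., φ = 2πl/(K·N₀) for some integer l. Then, with N = K·N₀, μ = e^{λT} is a Floquet multiplier of the discrete traveling wave x_n(t) = y(t−nτ) in the network of size N, with bundle z_n(t) = ζ(t−nτ)·e^{λt + inφ}, n = 1,…,N. -/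
/-!
Extend the bundle `z_n(t) = e^{λt + inφ} ζ(t - nτ)` to real node indices `n`. The master
stability equation for `ζ` at time `t - nτ` is then exactly the variational equation for `z_n`
on the infinite lattice. Since `e^{iNφ} = 1` and `Nτ = K M₀ T` is a multiple of the period of
`ζ`, the bundle is `N`-periodic in the node index, hence a solution on the ring of `N` nodes,
and `T`-periodicity of `ζ` gives `z(t + T) = e^{λT} z(t)`.
-/

noncomputable section

open Complex

theorem ZMod.exists_val_add_intCast {N : ℕ} [NeZero N] (n : ZMod N) (m : ℤ) :
    ∃ q : ℤ, ((n + m).val : ℤ) = n.val + m + q * N := by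
  have hcast : (((n.val + m : ℤ)) : ZMod N) = (((n + m).val : ℤ) : ZMod N) := by
    push_cast
    rw [ZMod.natCast_zmod_val, ZMod.natCast_zmod_val]
  obtain ⟨q, hq⟩ := (ZMod.intCast_eq_intCast_iff_dvd_sub _ _ _).mp hcast
  exact ⟨q, by linear_combination hq⟩

section PlaneWave

variable {d : ℕ} (lam : ℂ) (φ τ : ℝ) (ζ : ℝ → Fin d → ℂ)

/-- `pwave` with a real node index, so that the offsets `m = j - r` and multiples of the ring
size can be added to the index. -/
def planeWave (x t : ℝ) : Fin d → ℂ :=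
  exp (lam * t + I * ((x * φ : ℝ) : ℂ)) • ζ (t - x * τ)

theorem pwave_eq_planeWave (ν : ℕ) : pwave d lam φ τ ζ ν = planeWave lam φ τ ζ ν := rfl

variable {lam φ τ ζ}

theorem planeWave_eq_zero_iff {x t : ℝ} : planeWave lam φ τ ζ x t = 0 ↔ ζ (t - x * τ) = 0 :=
  smul_eq_zero_iff_right (exp_ne_zero _)

theorem planeWave_add (x m t : ℝ) :
    planeWave lam φ τ ζ (x + m) t =
      exp (I * ((m * φ : ℝ) : ℂ)) •
        exp (lam * t + I * ((x * φ : ℝ) : ℂ)) • ζ (t - x * τ - m * τ) := by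
  rw [planeWave, smul_smul, ← exp_add]
  congr 2
  · push_cast; ring
  · ring

theorem planeWave_add_int_mul {P : ℝ} (hφ : exp (I * ((P * φ : ℝ) : ℂ)) = 1)
    (hζ : Function.Periodic ζ (P * τ)) (x : ℝ) (q : ℤ) :
    planeWave lam φ τ ζ (x + q * P) = planeWave lam φ τ ζ x := by
  funext t
  have hexp : exp (I * (((q * P) * φ : ℝ) : ℂ)) = 1 := by
    rw [show I * (((q * P) * φ : ℝ) : ℂ) = q * (I * ((P * φ : ℝ) : ℂ)) by push_cast; ring,
      exp_int_mul, hφ, one_zpow]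
  have hζq : ζ (t - x * τ - (q * P) * τ) = ζ (t - x * τ) := by
    simpa [mul_assoc] using (hζ.int_mul q).sub_eq (t - x * τ)
  rw [planeWave_add, hexp, one_smul, hζq, planeWave]

theorem planeWave_add_period {T : ℝ} (hζ : Function.Periodic ζ T) (x t : ℝ) :
    planeWave lam φ τ ζ x (t + T) = exp (lam * T) • planeWave lam φ τ ζ x t := by
  rw [planeWave, planeWave, smul_smul, ← exp_add, add_sub_right_comm, hζ]
  congr 2
  push_cast
  ring

theorem planeWave_hasDerivAt {x t : ℝ} {ζ' : Fin d → ℂ} (h : HasDerivAt ζ ζ' (t - x * τ)) :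
    HasDerivAt (planeWave lam φ τ ζ x)
      (exp (lam * t + I * ((x * φ : ℝ) : ℂ)) • (lam • ζ (t - x * τ) + ζ')) t := by
  have hlin : HasDerivAt (fun s : ℝ => lam * s + I * ((x * φ : ℝ) : ℂ)) lam t := by
    simpa using ((hasDerivAt_id t).ofReal_comp.const_mul lam).add_const (I * ((x * φ : ℝ) : ℂ))
  refine (hlin.cexp.smul (h.comp_sub_const t (x * τ))).congr_deriv ?_
  rw [smul_add, smul_smul, mul_comm, add_comm]

/-- The term `-λ ζ` of the master stability equation cancels the derivative of `e^{λt}`, and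
each `e^{imφ}` is absorbed into the neighbour at offset `m`. -/
theorem planeWave_hasDerivAt_of_satMSE {r : ℕ}
    {A : ℝ → Fin (2 * r + 1) → Matrix (Fin d) (Fin d) ℂ} (hMSE : SatMSE d r A τ lam φ ζ)
    (x t : ℝ) :
    HasDerivAt (planeWave lam φ τ ζ x)
      (∑ j, (A (t - x * τ) j).mulVec (planeWave lam φ τ ζ (x + mShift r j) t)) t := by
  convert planeWave_hasDerivAt (hMSE (t - x * τ)) using 1
  simp only [planeWave_add, Matrix.mulVec_smul, neg_smul, add_neg_cancel_left, Finset.smul_sum]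
  exact Finset.sum_congr rfl fun j _ => smul_comm _ _ _

theorem planeWave_val_add_nodeOff {N r : ℕ} [NeZero N]
    (hφ : exp (I * ((N * φ : ℝ) : ℂ)) = 1) (hζ : Function.Periodic ζ (N * τ))
    (n : ZMod N) (j : Fin (2 * r + 1)) :
    planeWave lam φ τ ζ ((n + nodeOff N r j).val : ℕ) =
      planeWave lam φ τ ζ (n.val + mShift r j) := by
  obtain ⟨q, hq⟩ := ZMod.exists_val_add_intCast n ((j : ℕ) - r : ℤ)
  have hqR : (((n + nodeOff N r j).val : ℕ) : ℝ) = (n.val + mShift r j) + q * N := by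
    rw [mShift, ← Int.cast_natCast, nodeOff, hq]
    push_cast
    ring
  rw [hqR, planeWave_add_int_mul hφ hζ]

theorem satFloquet_planeWave {N r : ℕ} [NeZero N]
    {A : ℝ → Fin (2 * r + 1) → Matrix (Fin d) (Fin d) ℂ} {T : ℝ}
    (hφ : exp (I * ((N * φ : ℝ) : ℂ)) = 1) (hζN : Function.Periodic ζ (N * τ))
    (hζT : Function.Periodic ζ T) (hMSE : SatMSE d r A τ lam φ ζ) :
    SatFloquet N d r A τ T (exp (lam * T)) fun n => planeWave lam φ τ ζ (n.val : ℕ) := by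
  refine ⟨fun n t => ?_, fun n t => planeWave_add_period hζT _ t⟩
  simpa only [planeWave_val_add_nodeOff hφ hζN] using planeWave_hasDerivAt_of_satMSE hMSE _ t

end PlaneWave

theorem mse_gives_floquet_in_multiples_general
    (d r N₀ M₀ K : ℕ) (hN₀ : 0 < N₀)
    (hK : 0 < K)
    (G : (Fin (2 * r + 1) → Fin d → ℝ) → Fin d → ℝ)
    (τ T : ℝ) (hcons : (N₀ : ℝ) * τ = (M₀ : ℝ) * T)
    (y : ℝ → Fin d → ℝ)
    (lam : ℂ) (l : ℤ) (φ : ℝ) (hφ : φ = 2 * Real.pi * (l : ℝ) / ((K * N₀ : ℕ) : ℝ))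
    (ζ : ℝ → Fin d → ℂ) (hζne : ζ ≠ 0) (hζper : ∀ t, ζ (t + T) = ζ t)
    (hMSE : SatMSE d r (Amat d r G y τ) τ lam φ ζ) :
    (¬ ∀ (n : ZMod (K * N₀)) (t : ℝ), pwave d lam φ τ ζ n.val t = 0) ∧
    SatFloquet (K * N₀) d r (Amat d r G y τ) τ T (Complex.exp (lam * (T : ℂ)))
      (fun n => pwave d lam φ τ ζ n.val) := by
  have : NeZero (K * N₀) := ⟨(Nat.mul_pos hK hN₀).ne'⟩
  have hrootφ : exp (I * ((((K * N₀ : ℕ) : ℝ) * φ : ℝ) : ℂ)) = 1 := by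
    have hNφ : ((K * N₀ : ℕ) : ℝ) * φ = 2 * Real.pi * l := by
      rw [hφ]; field_simp
    rw [hNφ, show I * ((2 * Real.pi * l : ℝ) : ℂ) = l * (2 * Real.pi * I) by push_cast; ring,
      exp_int_mul_two_pi_mul_I]
  have hζN : Function.Periodic ζ (((K * N₀ : ℕ) : ℝ) * τ) := by
    rw [Nat.cast_mul, mul_assoc, hcons, ← mul_assoc, ← Nat.cast_mul]
    exact Function.Periodic.nat_mul hζper _
  simp only [pwave_eq_planeWave]
  refine ⟨fun hzero => hζne ?_, satFloquet_planeWave hrootφ hζN hζper hMSE⟩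
  funext t
  simpa [planeWave_eq_zero_iff] using hzero 0 t

/-- If `(λ, φ, ζ)` satisfies the master stability equation for the
profile `y` (with `N₀τ = M₀T`) and `e^{iφ}` is a `(K·N₀)`-th root of unity,
`φ = 2πl/(K·N₀)`, then `μ = e^{λT}` is a Floquet multiplier of the traveling wave in
the network of size `N = K·N₀`, with bundle `z_n(t) = ζ(t−nτ)e^{λt+inφ}`. -/
theorem mse_gives_floquet_in_multiples
    (d r N₀ M₀ K : ℕ) (hd : 1 ≤ d) (hr : 1 ≤ r) (hN₀ : 0 < N₀) (hM₀ : 0 < M₀)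
    (hK : 0 < K)
    (G : (Fin (2 * r + 1) → Fin d → ℝ) → Fin d → ℝ) (hG : ContDiff ℝ 1 G)
    (τ T : ℝ) (hτ : 0 < τ) (hT : 0 < T) (hcons : (N₀ : ℝ) * τ = (M₀ : ℝ) * T)
    (y : ℝ → Fin d → ℝ) (hyC1 : ContDiff ℝ 1 y) (hyper : ∀ t, y (t + T) = y t)
    (hyprof : SatProfile d r G y τ)
    (lam : ℂ) (l : ℤ) (φ : ℝ) (hφ : φ = 2 * Real.pi * (l : ℝ) / ((K * N₀ : ℕ) : ℝ))
    (ζ : ℝ → Fin d → ℂ) (hζne : ζ ≠ 0) (hζper : ∀ t, ζ (t + T) = ζ t)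
    (hζC1 : ContDiff ℝ 1 ζ)
    (hMSE : SatMSE d r (Amat d r G y τ) τ lam φ ζ) :
    (¬ ∀ (n : ZMod (K * N₀)) (t : ℝ), pwave d lam φ τ ζ n.val t = 0) ∧
    SatFloquet (K * N₀) d r (Amat d r G y τ) τ T (Complex.exp (lam * (T : ℂ)))
      (fun n => pwave d lam φ τ ζ n.val) :=
  mse_gives_floquet_in_multiples_general d r N₀ M₀ K hN₀ hK G τ T hcons y lam l φ hφ ζ hζne hζper
    hMSE
end
end
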